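/- arXiv:2510.11582 — 10 statements merged into one kernel-verified Lean document; each statement's English description precedes it below -/
import Mathlib

section
/- Let N ∈ ℕ, let (c₁,…,c_N, σ) ∈ ℝ₊^{N+1} be a nonnegative vector with c₁ > 0 and σ > 0, and define s : ℝ₊^N → ℝ₊ by s(x) = c₁x₁ / (∑_{n=1}^N cₙxₙ + σ). Then the function f : ℝ₊₊^N → ℝ₊₊ given by f(x) = x₁ / log(1 + s(x)) is concave on the positive cone ℝ₊₊^N. -/
/-!
Writing `D(x) = ∑ₙ cₙ xₙ + σ` and `φ(r) = r / log (1 + r)`, the function is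
`x ↦ (D(x) / c₁) · φ(x₁ / (D(x) / c₁))`, the perspective of `φ` along the positive affine map
`D / c₁`. Perspectives of concave functions are concave, so it suffices that `φ` is concave on
`(0, ∞)`. Its second derivative is `(2r - (2 + r) log (1 + r)) / ((1 + r)² log³ (1 + r))`,
which is nonpositive by the classical bound `2r / (r + 2) ≤ log (1 + r)`.
-/

open Set

theorem ConcaveOn.perspective {E : Type*} [AddCommGroup E] [Module ℝ E]
    {s : Set ℝ} {g : ℝ → ℝ} (hg : ConcaveOn ℝ s g) {C : Set E} (hC : Convex ℝ C)
    (p q : E →ᵃ[ℝ] ℝ) (hq : ∀ x ∈ C, 0 < q x) (hs : ∀ x ∈ C, p x / q x ∈ s) :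
    ConcaveOn ℝ C fun x => q x * g (p x / q x) := by
  refine ⟨hC, fun x hx y hy a b ha hb hab => ?_⟩
  have hqx := hq x hx
  have hqy := hq y hy
  have hqz := hq _ (hC hx hy ha hb hab)
  simp only [Convex.combo_affine_apply hab, smul_eq_mul] at hqz ⊢
  set Q := a * q x + b * q y
  -- apply the concavity of `g` with the weights `a q x / Q` and `b q y / Q`
  have key := hg.2 (hs x hx) (hs y hy) (div_nonneg (mul_nonneg ha hqx.le) hqz.le)
    (div_nonneg (mul_nonneg hb hqy.le) hqz.le) (by rw [← add_div]; exact div_self hqz.ne')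
  have hpz : a * q x / Q * (p x / q x) + b * q y / Q * (p y / q y) = (a * p x + b * p y) / Q := by
    field_simp
  simp only [smul_eq_mul, hpz] at key
  calc a * (q x * g (p x / q x)) + b * (q y * g (p y / q y))
      = Q * (a * q x / Q * g (p x / q x) + b * q y / Q * g (p y / q y)) := by field_simp
    _ ≤ Q * g ((a * p x + b * p y) / Q) := by gcongr

namespace Real

lemma hasDerivAt_log_one_add {r : ℝ} (hr : -1 < r) :
    HasDerivAt (fun r => log (1 + r)) (1 / (1 + r)) r :=
  ((hasDerivAt_id' r).const_add 1).log (by linarith : (0 : ℝ) < 1 + r).ne'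

lemma hasDerivAt_div_log_one_add {r : ℝ} (hr : 0 < r) :
    HasDerivAt (fun r => r / log (1 + r))
      ((log (1 + r) - r / (1 + r)) / log (1 + r) ^ 2) r := by
  have hL : 0 < log (1 + r) := log_pos (by linarith)
  refine ((hasDerivAt_id' r).fun_div (hasDerivAt_log_one_add (by linarith)) hL.ne').congr_deriv ?_
  field_simp

lemma hasDerivAt_deriv_div_log_one_add {r : ℝ} (hr : 0 < r) :
    HasDerivAt (fun r => (log (1 + r) - r / (1 + r)) / log (1 + r) ^ 2)
      ((2 * r - (2 + r) * log (1 + r)) / ((1 + r) ^ 2 * log (1 + r) ^ 3)) r := by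
  have h1 : 0 < 1 + r := by linarith
  have hL : 0 < log (1 + r) := log_pos (by linarith)
  have hlog := hasDerivAt_log_one_add (r := r) (by linarith)
  have hnum := hlog.fun_sub ((hasDerivAt_id' r).fun_div ((hasDerivAt_id' r).const_add 1) h1.ne')
  refine (hnum.fun_div (hlog.fun_pow 2) (pow_pos hL 2).ne').congr_deriv ?_
  field_simp
  ring

theorem concaveOn_div_log_one_add : ConcaveOn ℝ (Ioi 0) fun r => r / log (1 + r) := by
  refine concaveOn_of_hasDerivWithinAt2_nonpos (convex_Ioi 0) ?_
    (fun r hr => (hasDerivAt_div_log_one_add (by simpa using hr)).hasDerivWithinAt)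
    (fun r hr => (hasDerivAt_deriv_div_log_one_add (by simpa using hr)).hasDerivWithinAt) ?_
  · exact fun r hr => (hasDerivAt_div_log_one_add hr).continuousAt.continuousWithinAt
  · intro r hr
    have hr : 0 < r := by simpa using hr
    have hL : 0 < log (1 + r) := log_pos (by linarith)
    have hbound := le_log_one_add_of_nonneg hr.le
    rw [div_le_iff₀ (by linarith)] at hbound
    exact div_nonpos_of_nonpos_of_nonneg (by linarith) (by positivity)

end Real

/-- Fact 1 (concavity part): for nonnegative `c` with `c₁ > 0` and `σ > 0`, the function
`x ↦ x₁ / log(1 + s(x))`, where `s(x) = c₁ x₁ / (∑ₙ cₙ xₙ + σ)`, is concave on the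
open positive cone `ℝ₊₊^N`. -/
theorem stmt0 (N : ℕ) (hN : 0 < N) (c : Fin N → ℝ) (σ : ℝ)
    (hc : ∀ n, 0 ≤ c n) (hc1 : 0 < c ⟨0, hN⟩) (hσ : 0 < σ) :
    ConcaveOn ℝ {x : Fin N → ℝ | ∀ i, 0 < x i}
      (fun x : Fin N → ℝ =>
        x ⟨0, hN⟩ /
          Real.log (1 + c ⟨0, hN⟩ * x ⟨0, hN⟩ / (∑ n, c n * x n + σ))) := by
  set i₀ : Fin N := ⟨0, hN⟩
  set K := {x : Fin N → ℝ | ∀ i, 0 < x i}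
  let p : (Fin N → ℝ) →ᵃ[ℝ] ℝ := (LinearMap.proj i₀).toAffineMap
  let q : (Fin N → ℝ) →ᵃ[ℝ] ℝ := (c i₀)⁻¹ •
    ((∑ n, c n • LinearMap.proj n : (Fin N → ℝ) →ₗ[ℝ] ℝ).toAffineMap + AffineMap.const ℝ _ σ)
  have hq_apply (x : Fin N → ℝ) : q x = (∑ n, c n * x n + σ) / c i₀ := by
    simp [q, div_eq_inv_mul, mul_add]
  have hD : ∀ x ∈ K, 0 < ∑ n, c n * x n + σ := fun x hx =>
    add_pos_of_nonneg_of_pos (Finset.sum_nonneg fun n _ => mul_nonneg (hc n) (hx n).le) hσ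
  have hK : Convex ℝ K := fun x hx y hy a b ha hb hab i =>
    convex_Ioi (0 : ℝ) (hx i) (hy i) ha hb hab
  have hq : ∀ x ∈ K, 0 < q x := fun x hx => hq_apply x ▸ div_pos (hD x hx) hc1
  refine (Real.concaveOn_div_log_one_add.perspective hK p q hq
    fun x hx => div_pos (hx i₀) (hq x hx)).congr fun x hx => ?_
  have hL : 0 < Real.log (1 + c i₀ * x i₀ / (∑ n, c n * x n + σ)) :=
    Real.log_pos (lt_add_of_pos_right 1 (div_pos (mul_pos hc1 (hx i₀)) (hD x hx)))
  simp only [p, hq_apply, LinearMap.coe_toAffineMap, LinearMap.proj_apply]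
  field_simp [(hD x hx).ne']
end

section
/- Let N ∈ ℕ, let (c₁,…,c_N, σ) ∈ ℝ₊^{N+1} with c₁ > 0 and σ > 0, let s(x) = c₁x₁ / (∑_{n=1}^N cₙxₙ + σ), and let f : ℝ₊₊^N → ℝ₊₊ be f(x) = x₁ / log(1 + s(x)). Then f admits a continuous extension f̄ : ℝ₊^N → ℝ₊ to the closed nonnegative cone, this extension f̄ is a concave function, and it satisfies f̄(x) ≥ f̄(0) = σ/c₁ > 0 for every x ∈ ℝ₊^N. -/
/-!
With `b = ∑ cₙxₙ + σ` and `a = b + c₁x₁` one has `f(x) = L(a, b) / c₁`, where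
`L(a, b) = (a - b) / (log a - log b) = ∫₀¹ aᵗ b¹⁻ᵗ dt` is the logarithmic mean. The integral
defines `L` continuously on the whole open quadrant, diagonal included (`L(a, a) = a`), which
gives the extension. Each weighted geometric mean `aᵗ b¹⁻ᵗ` is concave, hence so is `L`, and
composing with the affine map `x ↦ (a, b)` keeps concavity. Finally
`L(a, b) ≥ min a b = b ≥ σ`, with equality at `x = 0`.
-/

open Real Set

noncomputable def logMean (a b : ℝ) : ℝ := ∫ t in (0:ℝ)..1, a ^ t * b ^ (1 - t)

lemma logMean_self {a : ℝ} (ha : 0 < a) : logMean a a = a := by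
  simp [logMean, ← rpow_add ha]

lemma logMean_of_ne {a b : ℝ} (ha : 0 < a) (hb : 0 < b) (hab : a ≠ b) :
    logMean a b = (a - b) / (log a - log b) := by
  have hk : log a - log b ≠ 0 := sub_ne_zero.2 fun h => hab (log_injOn_pos ha hb h)
  have h : ∀ t : ℝ, a ^ t * b ^ (1 - t) = b * exp ((log a - log b) * t) := by
    intro t
    rw [rpow_def_of_pos ha, rpow_def_of_pos hb, ← exp_log hb, log_exp, ← exp_add, ← exp_add]
    ring_nf
  simp only [logMean, h, intervalIntegral.integral_const_mul,
    intervalIntegral.integral_comp_mul_left (fun x => exp x) hk, integral_exp]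
  rw [mul_one, mul_zero, exp_zero, exp_sub, exp_log ha, exp_log hb, smul_eq_mul]
  field_simp

/-- The tangent plane at `(a, b)` of the weighted geometric mean lies above it. -/
lemma rpow_mul_rpow_le_of_pos {t x y a b : ℝ} (ht₀ : 0 ≤ t) (ht₁ : t ≤ 1) (hx : 0 ≤ x)
    (hy : 0 ≤ y) (ha : 0 < a) (hb : 0 < b) :
    x ^ t * y ^ (1 - t) ≤ a ^ t * b ^ (1 - t) * (t * (x / a) + (1 - t) * (y / b)) := by
  have amgm := geom_mean_le_arith_mean2_weighted ht₀ (sub_nonneg.2 ht₁)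
    (div_nonneg hx ha.le) (div_nonneg hy hb.le) (add_sub_cancel t 1)
  rw [div_rpow hx ha.le, div_rpow hy hb.le, div_mul_div_comm,
    div_le_iff₀ (by positivity)] at amgm
  linarith

lemma concaveOn_rpow_mul_rpow {t : ℝ} (ht₀ : 0 ≤ t) (ht₁ : t ≤ 1) :
    ConcaveOn ℝ (Ioi 0 ×ˢ Ioi 0) fun p : ℝ × ℝ => p.1 ^ t * p.2 ^ (1 - t) := by
  refine ⟨(convex_Ioi 0).prod (convex_Ioi 0), ?_⟩
  rintro u ⟨hu₁, hu₂⟩ v ⟨hv₁, hv₂⟩ p q hp hq hpq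
  simp only [mem_Ioi] at hu₁ hu₂ hv₁ hv₂
  have hz₁ : 0 < p * u.1 + q * v.1 := (convex_Ioi (0:ℝ)) hu₁ hv₁ hp hq hpq
  have hz₂ : 0 < p * u.2 + q * v.2 := (convex_Ioi (0:ℝ)) hu₂ hv₂ hp hq hpq
  simp only [Prod.fst_add, Prod.snd_add, Prod.smul_fst, Prod.smul_snd, smul_eq_mul]
  set G := (p * u.1 + q * v.1) ^ t * (p * u.2 + q * v.2) ^ (1 - t)
  calc p * (u.1 ^ t * u.2 ^ (1 - t)) + q * (v.1 ^ t * v.2 ^ (1 - t))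
      ≤ p * (G * (t * (u.1 / _) + (1 - t) * (u.2 / _)))
        + q * (G * (t * (v.1 / _) + (1 - t) * (v.2 / _))) :=
        add_le_add
          (mul_le_mul_of_nonneg_left (rpow_mul_rpow_le_of_pos ht₀ ht₁ hu₁.le hu₂.le hz₁ hz₂) hp)
          (mul_le_mul_of_nonneg_left (rpow_mul_rpow_le_of_pos ht₀ ht₁ hv₁.le hv₂.le hz₁ hz₂) hq)
    _ = G := by
        have h₁ : p * (u.1 / (p * u.1 + q * v.1)) + q * (v.1 / (p * u.1 + q * v.1)) = 1 := by
          field_simp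
        have h₂ : p * (u.2 / (p * u.2 + q * v.2)) + q * (v.2 / (p * u.2 + q * v.2)) = 1 := by
          field_simp
        linear_combination (G * t) * h₁ + (G * (1 - t)) * h₂

lemma intervalIntegrable_rpow_mul_rpow {a b : ℝ} (ha : 0 < a) (hb : 0 < b) :
    IntervalIntegrable (fun t : ℝ => a ^ t * b ^ (1 - t)) MeasureTheory.volume 0 1 :=
  Continuous.intervalIntegrable (by fun_prop (disch := positivity)) 0 1

lemma min_le_logMean {a b : ℝ} (ha : 0 < a) (hb : 0 < b) : min a b ≤ logMean a b := by
  have hm : 0 < min a b := lt_min ha hb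
  have key : ∀ t ∈ Icc (0:ℝ) 1, min a b ≤ a ^ t * b ^ (1 - t) := fun t ht =>
    calc min a b = min a b ^ t * min a b ^ (1 - t) := by rw [← rpow_add hm]; simp
      _ ≤ a ^ t * b ^ (1 - t) := by
        gcongr
        exacts [ht.1, min_le_left a b, sub_nonneg.2 ht.2, min_le_right a b]
  simpa [logMean] using intervalIntegral.integral_mono_on zero_le_one intervalIntegrable_const
    (intervalIntegrable_rpow_mul_rpow ha hb) key

lemma concaveOn_logMean : ConcaveOn ℝ (Ioi 0 ×ˢ Ioi 0) fun p : ℝ × ℝ => logMean p.1 p.2 := by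
  refine ⟨(convex_Ioi 0).prod (convex_Ioi 0), ?_⟩
  rintro u hu v hv p q hp hq hpq
  have hz := ((convex_Ioi 0).prod (convex_Ioi 0)) hu hv hp hq hpq
  have hint : ∀ w ∈ Ioi (0:ℝ) ×ˢ Ioi 0,
      IntervalIntegrable (fun t : ℝ => w.1 ^ t * w.2 ^ (1 - t)) MeasureTheory.volume 0 1 :=
    fun w hw => intervalIntegrable_rpow_mul_rpow hw.1 hw.2
  have key := intervalIntegral.integral_mono_on zero_le_one
    (((hint u hu).const_mul p).add ((hint v hv).const_mul q)) (hint _ hz)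
    fun t ht => (concaveOn_rpow_mul_rpow ht.1 ht.2).2 hu hv hp hq hpq
  simp only [smul_eq_mul] at key ⊢
  rwa [intervalIntegral.integral_add ((hint u hu).const_mul p) ((hint v hv).const_mul q),
    intervalIntegral.integral_const_mul, intervalIntegral.integral_const_mul] at key

lemma continuousOn_logMean :
    ContinuousOn (fun p : ℝ × ℝ => logMean p.1 p.2) (Ioi 0 ×ˢ Ioi 0) := by
  rw [continuousOn_iff_continuous_domRestrict]
  refine intervalIntegral.continuous_parametric_intervalIntegral_of_continuous'
    (f := fun (p : ↥(Ioi (0:ℝ) ×ˢ Ioi 0)) (t : ℝ) => p.1.1 ^ t * p.1.2 ^ (1 - t)) ?_ 0 1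
  refine Continuous.mul ?_ ?_
  · exact (continuous_fst.comp (continuous_subtype_val.comp continuous_fst)).rpow continuous_snd
      fun p => Or.inl p.1.2.1.ne'
  · exact (continuous_snd.comp (continuous_subtype_val.comp continuous_fst)).rpow
      (continuous_const.sub continuous_snd) fun p => Or.inl p.1.2.2.ne'

noncomputable def logMeanExtension {ι : Type*} [Fintype ι] (c : ι → ℝ) (σ : ℝ) (i : ι)
    (x : ι → ℝ) : ℝ :=
  logMean (∑ n, c n * x n + σ + c i * x i) (∑ n, c n * x n + σ) / c i

section
variable {ι : Type*} [Fintype ι] {c : ι → ℝ} {σ : ℝ} {x : ι → ℝ}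

lemma le_sum_mul_add (hc : ∀ n, 0 ≤ c n) (hx : ∀ n, 0 ≤ x n) : σ ≤ ∑ n, c n * x n + σ :=
  le_add_of_nonneg_left (Finset.sum_nonneg fun n _ => mul_nonneg (hc n) (hx n))

lemma pair_mem_Ioi_prod_Ioi (hc : ∀ n, 0 ≤ c n) (hσ : 0 < σ) (i : ι) (hx : ∀ n, 0 ≤ x n) :
    (∑ n, c n * x n + σ + c i * x i, ∑ n, c n * x n + σ) ∈ Ioi (0 : ℝ) ×ˢ Ioi 0 := by
  have := le_sum_mul_add (σ := σ) hc hx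
  have := mul_nonneg (hc i) (hx i)
  constructor <;> simp only [mem_Ioi] <;> linarith

variable (i : ι)

lemma logMeanExtension_eq (hci : 0 < c i) (hb : 0 < ∑ n, c n * x n + σ) (hxi : 0 < x i) :
    logMeanExtension c σ i x = x i / log (1 + c i * x i / (∑ n, c n * x n + σ)) := by
  set b := ∑ n, c n * x n + σ
  have hd : 0 < c i * x i := mul_pos hci hxi
  have ha : 0 < b + c i * x i := by linarith
  rw [logMeanExtension, logMean_of_ne ha hb (by linarith), ← log_div ha.ne' hb.ne',
    add_sub_cancel_left, add_div, div_self hb.ne']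
  field_simp

lemma logMeanExtension_zero (hσ : 0 < σ) : logMeanExtension c σ i 0 = σ / c i := by
  simp [logMeanExtension, logMean_self hσ]

lemma logMeanExtension_zero_le (hc : ∀ n, 0 ≤ c n) (hσ : 0 < σ) (hx : ∀ n, 0 ≤ x n) :
    logMeanExtension c σ i 0 ≤ logMeanExtension c σ i x := by
  obtain ⟨ha, hb⟩ := pair_mem_Ioi_prod_Ioi hc hσ i hx
  rw [logMeanExtension_zero i hσ, logMeanExtension]
  gcongr
  · exact hc i
  calc σ ≤ ∑ n, c n * x n + σ := le_sum_mul_add hc hx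
    _ = min (∑ n, c n * x n + σ + c i * x i) (∑ n, c n * x n + σ) :=
        (min_eq_right (le_add_of_nonneg_right (mul_nonneg (hc i) (hx i)))).symm
    _ ≤ _ := min_le_logMean ha hb

lemma continuousOn_logMeanExtension (hc : ∀ n, 0 ≤ c n) (hσ : 0 < σ) :
    ContinuousOn (logMeanExtension c σ i) {x | ∀ n, 0 ≤ x n} := by
  refine ContinuousOn.div_const (continuousOn_logMean.comp (Continuous.continuousOn ?_)
    fun x hx => pair_mem_Ioi_prod_Ioi hc hσ i hx) _
  fun_prop

lemma concaveOn_logMeanExtension (hc : ∀ n, 0 ≤ c n) (hσ : 0 < σ) :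
    ConcaveOn ℝ {x | ∀ n, 0 ≤ x n} (logMeanExtension c σ i) := by
  let ℓ : (ι → ℝ) →ₗ[ℝ] ℝ := ∑ n, c n • LinearMap.proj n
  let L : (ι → ℝ) →ₗ[ℝ] ℝ × ℝ := (ℓ + c i • LinearMap.proj i).prod ℓ
  have hL : ∀ x, (σ, σ) + L x = (∑ n, c n * x n + σ + c i * x i, ∑ n, c n * x n + σ) :=
    fun x => by ext <;> simp [L, ℓ] <;> ring
  refine (((concaveOn_logMean.translate_right (σ, σ)).comp_linearMap L).subset
    (fun x hx => ?_) (convex_Ici 0)).smul (inv_nonneg.2 (hc i)) |>.congr fun x _ => ?_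
  · rw [mem_preimage, mem_preimage, hL]
    exact pair_mem_Ioi_prod_Ioi hc hσ i hx
  · simp only [Function.comp_apply, hL, smul_eq_mul, logMeanExtension, inv_mul_eq_div]
end

/-- Fact 1 (extension part): the function `f(x) = x₁ / log(1 + s(x))`, with
`s(x) = c₁ x₁ / (∑ₙ cₙ xₙ + σ)`, admits a continuous extension `f̄` to the closed
nonnegative cone `ℝ₊^N`; this extension is concave and satisfies
`f̄(x) ≥ f̄(0) = σ / c₁ > 0` for every `x ∈ ℝ₊^N`. -/
theorem stmt1 (N : ℕ) (hN : 0 < N) (c : Fin N → ℝ) (σ : ℝ)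
    (hc : ∀ n, 0 ≤ c n) (hc1 : 0 < c ⟨0, hN⟩) (hσ : 0 < σ) :
    ∃ fbar : (Fin N → ℝ) → ℝ,
      ContinuousOn fbar {x : Fin N → ℝ | ∀ i, 0 ≤ x i} ∧
      (∀ x : Fin N → ℝ, (∀ i, 0 < x i) →
        fbar x =
          x ⟨0, hN⟩ /
            Real.log (1 + c ⟨0, hN⟩ * x ⟨0, hN⟩ / (∑ n, c n * x n + σ))) ∧
      ConcaveOn ℝ {x : Fin N → ℝ | ∀ i, 0 ≤ x i} fbar ∧
      fbar 0 = σ / c ⟨0, hN⟩ ∧ 0 < fbar 0 ∧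
      (∀ x : Fin N → ℝ, (∀ i, 0 ≤ x i) → fbar 0 ≤ fbar x) := by
  refine ⟨logMeanExtension c σ ⟨0, hN⟩, continuousOn_logMeanExtension _ hc hσ, fun x hx => ?_,
    concaveOn_logMeanExtension _ hc hσ, logMeanExtension_zero _ hσ, ?_,
    fun x hx => logMeanExtension_zero_le _ hc hσ hx⟩
  · exact logMeanExtension_eq _ hc1 (hσ.trans_le (le_sum_mul_add hc fun n => (hx n).le)) (hx _)
  · rw [logMeanExtension_zero _ hσ]
    positivity
end

section
/- Let T : ℝ₊₊^N → ℝ₊₊^N be an MSP mapping and let ‖·‖ be a monotone norm on ℝ^N. Then there exists exactly one pair (γ, x) ∈ ℝ₊₊ × ℝ₊₊^N such that T(x) = γx and ‖x‖ = 1. -/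
/-!
Let `D x y = (maxᵢ xᵢ / yᵢ) · (maxᵢ yᵢ / xᵢ)` (`hilbertGauge`, the exponential of Hilbert's
projective metric); it does not change when either argument is rescaled. Monotonicity and
scalability make an MSP mapping `T` continuous on the open cone and a strict contraction for `D`
between distinct unit vectors (a monotone norm forces both ratios to be at least `1`). On positive
unit vectors `c ≤ T x ≤ T u`, where `cᵢ = inf Tᵢ > 0` and `uⱼ = 1 / ‖eⱼ‖`, so the normalized map
`S x = T x / ‖T x‖` sends them into a compact box inside the open cone. Since
`D (S x) (S (S x)) = D (T x) (T (S x)) < D x (S x)` unless `S x = x`, a minimizer of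
`x ↦ D x (S x)` on that compact set is a fixed point of `S`, i.e. an eigenvector. Two unit
eigenvectors `x ≠ y` would give `D (T x) (T y) = D x y`, contradicting strict contraction.
-/
open MeasureTheory Filter

/-- The open positive cone in `ℝ^N`. -/
def PosCone (N : ℕ) : Set (Fin N → ℝ) := {x | ∀ i, 0 < x i}

/-- A monotonic, scalable, and positive (MSP) function on the positive cone `ℝ₊₊^N`:
(0) it is positive on the cone, (i) monotone on the cone, (ii) scalable, and
(iii) its infimum over the cone is positive. -/
def IsMSPFun {N : ℕ} (f : (Fin N → ℝ) → ℝ) : Prop :=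
  (∀ x : Fin N → ℝ, (∀ i, 0 < x i) → 0 < f x) ∧
  (∀ x y : Fin N → ℝ, (∀ i, 0 < x i) → (∀ i, 0 < y i) → x ≤ y → f x ≤ f y) ∧
  (∀ α : ℝ, 1 < α → ∀ x : Fin N → ℝ, (∀ i, 0 < x i) → f (α • x) < α * f x) ∧
  0 < sInf (f '' PosCone N)

/-- An MSP mapping: every coordinate function is an MSP function. -/
def IsMSPMap {N : ℕ} (T : (Fin N → ℝ) → (Fin N → ℝ)) : Prop :=
  ∀ i, IsMSPFun (fun x => T x i)

/-- A monotone norm on `ℝ^N`: a genuine norm that is order-preserving on the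
nonnegative cone. -/
def IsMonoNorm {N : ℕ} (nrm : (Fin N → ℝ) → ℝ) : Prop :=
  (∀ x : Fin N → ℝ, nrm x = 0 ↔ x = 0) ∧
  (∀ (a : ℝ) (x : Fin N → ℝ), nrm (a • x) = |a| * nrm x) ∧
  (∀ x y : Fin N → ℝ, nrm (x + y) ≤ nrm x + nrm y) ∧
  (∀ x y : Fin N → ℝ, (∀ i, 0 ≤ x i) → (∀ i, 0 ≤ y i) → x ≤ y → nrm x ≤ nrm y)

open Set Topology

theorem IsCompact.exists_isFixedPt_of_lt {X α : Type*} [TopologicalSpace X] [LinearOrder α]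
    [TopologicalSpace α] [ClosedIicTopology α] {K : Set X} (hK : IsCompact K) (hne : K.Nonempty)
    {S : X → X} (hS : MapsTo S K K) {g : X → α} (hg : ContinuousOn g K)
    (hlt : ∀ x ∈ K, S x ≠ x → g (S x) < g x) : ∃ x ∈ K, Function.IsFixedPt S x := by
  obtain ⟨x, hx, hmin⟩ := hK.exists_isMinOn hne hg
  exact ⟨x, hx, by_contra fun h => (hlt x hx h).not_ge (hmin (hS hx))⟩

section MaxRatio

variable {ι : Type*} [Fintype ι] [Nonempty ι]

noncomputable def maxRatio (x y : ι → ℝ) : ℝ :=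
  Finset.univ.sup' Finset.univ_nonempty fun i => x i / y i

noncomputable def hilbertGauge (x y : ι → ℝ) : ℝ :=
  maxRatio x y * maxRatio y x

theorem div_le_maxRatio (x y : ι → ℝ) (i : ι) : x i / y i ≤ maxRatio x y :=
  Finset.le_sup' (fun i => x i / y i) (Finset.mem_univ i)

theorem maxRatio_le_iff {x y : ι → ℝ} (hy : ∀ i, 0 < y i) {r : ℝ} :
    maxRatio x y ≤ r ↔ x ≤ r • y := by
  simp only [maxRatio, Finset.sup'_le_iff, Finset.mem_univ, true_implies, Pi.le_def,
    Pi.smul_apply, smul_eq_mul]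
  exact forall_congr' fun i => div_le_iff₀ (hy i)

theorem maxRatio_lt_iff {x y : ι → ℝ} (hy : ∀ i, 0 < y i) {r : ℝ} :
    maxRatio x y < r ↔ ∀ i, x i < r * y i := by
  simp only [maxRatio, Finset.sup'_lt_iff, Finset.mem_univ, true_implies]
  exact forall_congr' fun i => div_lt_iff₀ (hy i)

theorem le_maxRatio_smul {x y : ι → ℝ} (hy : ∀ i, 0 < y i) : x ≤ maxRatio x y • y :=
  (maxRatio_le_iff hy).1 le_rfl

theorem maxRatio_pos {x y : ι → ℝ} (hx : ∀ i, 0 < x i) (hy : ∀ i, 0 < y i) :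
    0 < maxRatio x y :=
  (div_pos (hx (Classical.arbitrary ι)) (hy _)).trans_le (div_le_maxRatio x y _)

theorem maxRatio_self {x : ι → ℝ} (hx : ∀ i, x i ≠ 0) : maxRatio x x = 1 := by
  simp only [maxRatio, div_self (hx _), Finset.sup'_const]

theorem maxRatio_smul_smul {a b : ℝ} (ha : 0 ≤ a) (hb : 0 ≤ b) (x y : ι → ℝ) :
    maxRatio (a • x) (b • y) = a / b * maxRatio x y := by
  simp only [maxRatio, Finset.mul₀_sup' (div_nonneg ha hb), Pi.smul_apply, smul_eq_mul,
    mul_div_mul_comm]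

theorem eq_of_maxRatio_le_one {x y : ι → ℝ} (hx : ∀ i, 0 < x i) (hy : ∀ i, 0 < y i)
    (hxy : maxRatio x y ≤ 1) (hyx : maxRatio y x ≤ 1) : x = y :=
  le_antisymm (by simpa using (maxRatio_le_iff hy).1 hxy) (by simpa using (maxRatio_le_iff hx).1 hyx)

theorem hilbertGauge_smul_smul {a b : ℝ} (ha : 0 < a) (hb : 0 < b) (x y : ι → ℝ) :
    hilbertGauge (a • x) (b • y) = hilbertGauge x y := by
  rw [hilbertGauge, hilbertGauge, maxRatio_smul_smul ha.le hb.le, maxRatio_smul_smul hb.le ha.le]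
  field_simp

variable {X : Type*} [TopologicalSpace X] {f g : X → ι → ℝ} {s : Set X}

theorem ContinuousOn.maxRatio (hf : ContinuousOn f s) (hg : ContinuousOn g s)
    (hg0 : ∀ z ∈ s, ∀ i, g z i ≠ 0) : ContinuousOn (fun z => maxRatio (f z) (g z)) s :=
  ContinuousOn.finset_sup'_apply _ fun i _ =>
    ((continuous_apply i).comp_continuousOn hf).div ((continuous_apply i).comp_continuousOn hg)
      fun z hz => hg0 z hz i

theorem ContinuousAt.maxRatio {z : X} (hf : ContinuousAt f z) (hg : ContinuousAt g z)
    (hg0 : ∀ i, g z i ≠ 0) : ContinuousAt (fun z => maxRatio (f z) (g z)) z :=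
  ContinuousAt.finset_sup'_apply _ fun i _ =>
    ((continuous_apply i).continuousAt.comp hf).div ((continuous_apply i).continuousAt.comp hg)
      (hg0 i)

theorem ContinuousOn.hilbertGauge (hf : ContinuousOn f s) (hg : ContinuousOn g s)
    (hf0 : ∀ z ∈ s, ∀ i, f z i ≠ 0) (hg0 : ∀ z ∈ s, ∀ i, g z i ≠ 0) :
    ContinuousOn (fun z => hilbertGauge (f z) (g z)) s :=
  (hf.maxRatio hg hg0).mul (hg.maxRatio hf hf0)

end MaxRatio

theorem isOpen_posCone (N : ℕ) : IsOpen (PosCone N) := by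
  rw [show PosCone N = ⋂ i, {x | 0 < x i} by ext; simp [PosCone]]
  exact isOpen_iInter_of_finite fun i => isOpen_lt continuous_const (continuous_apply i)

namespace IsMonoNorm

variable {N : ℕ} {nrm : (Fin N → ℝ) → ℝ} (h : IsMonoNorm nrm)
include h

def toSeminorm : Seminorm ℝ (Fin N → ℝ) :=
  Seminorm.of nrm h.2.2.1 fun a x => by rw [h.2.1, Real.norm_eq_abs]

theorem nonneg (x : Fin N → ℝ) : 0 ≤ nrm x :=
  apply_nonneg h.toSeminorm x

theorem continuous : Continuous nrm :=
  h.toSeminorm.convexOn.locallyLipschitz.continuous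

theorem smul_of_nonneg {t : ℝ} (ht : 0 ≤ t) (x : Fin N → ℝ) : nrm (t • x) = t * nrm x := by
  rw [h.2.1, abs_of_nonneg ht]

theorem pos {x : Fin N → ℝ} (hx : x ≠ 0) : 0 < nrm x :=
  (h.nonneg x).lt_of_ne' (mt (h.1 x).1 hx)

theorem pos_of_mem_posCone [NeZero N] {x : Fin N → ℝ} (hx : x ∈ PosCone N) : 0 < nrm x :=
  h.pos fun h0 => (hx default).ne' (congrFun h0 default)

theorem mono {x y : Fin N → ℝ} (hx : 0 ≤ x) (hxy : x ≤ y) : nrm x ≤ nrm y :=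
  h.2.2.2 x y hx (fun i => (hx i).trans (hxy i)) hxy

theorem apply_mul_norm_single_le {x : Fin N → ℝ} (hx : 0 ≤ x) (j : Fin N) :
    x j * nrm (Pi.single j 1) ≤ nrm x := by
  have hsingle : Pi.single j (x j) = x j • (Pi.single j 1 : Fin N → ℝ) := by
    rw [← Pi.single_smul', smul_eq_mul, mul_one]
  rw [← h.smul_of_nonneg (hx j), ← hsingle]
  refine h.mono (Pi.single_nonneg.2 (hx j)) fun i => ?_
  rcases eq_or_ne i j with rfl | hij
  · simp
  · simpa [Pi.single_eq_of_ne hij] using hx i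

theorem one_le_maxRatio [NeZero N] {x y : Fin N → ℝ} (hx : x ∈ PosCone N) (hy : y ∈ PosCone N)
    (hxy : nrm x = nrm y) : 1 ≤ maxRatio x y := by
  have hle : nrm x ≤ maxRatio x y * nrm y := by
    rw [← h.smul_of_nonneg (maxRatio_pos hx hy).le]
    exact h.mono (fun i => (hx i).le) (le_maxRatio_smul hy)
  rw [hxy] at hle
  exact one_le_of_le_mul_right₀ (h.pos_of_mem_posCone hy) hle

end IsMonoNorm

namespace IsMSPFun

variable {N : ℕ} {f : (Fin N → ℝ) → ℝ} (hf : IsMSPFun f)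
include hf

theorem sInf_le {x : Fin N → ℝ} (hx : x ∈ PosCone N) : sInf (f '' PosCone N) ≤ f x :=
  csInf_le ⟨0, by rintro _ ⟨z, hz, rfl⟩; exact (hf.1 z hz).le⟩ (mem_image_of_mem f hx)

variable [NeZero N] {x y : Fin N → ℝ}

theorem apply_le_max_maxRatio_mul (hx : x ∈ PosCone N) (hy : y ∈ PosCone N) :
    f x ≤ max (maxRatio x y) 1 * f y := by
  set t := max (maxRatio x y) 1
  have ht : 1 ≤ t := le_max_right _ _
  have hxt : x ≤ t • y := (le_maxRatio_smul hy).trans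
    (smul_le_smul_of_nonneg_right (le_max_left _ _) fun i => (hy i).le)
  calc f x ≤ f (t • y) := hf.2.1 x _ hx (fun i => mul_pos (by linarith) (hy i)) hxt
    _ ≤ t * f y := by
      rcases ht.eq_or_lt with h | h
      · rw [← h, one_smul, one_mul]
      · exact (hf.2.2.1 t h y hy).le

theorem apply_lt_maxRatio_mul (hx : x ∈ PosCone N) (hy : y ∈ PosCone N)
    (h : 1 < maxRatio x y) : f x < maxRatio x y * f y :=
  (hf.2.1 x _ hx (fun i => mul_pos (by linarith) (hy i)) (le_maxRatio_smul hy)).trans_lt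
    (hf.2.2.1 _ h y hy)

theorem continuousOn : ContinuousOn f (PosCone N) := by
  intro x hx
  refine ContinuousAt.continuousWithinAt ?_
  have hx0 : ∀ i, x i ≠ 0 := fun i => (hx i).ne'
  have hleft : Tendsto (fun y => maxRatio y x) (𝓝 x) (𝓝 1) := by
    simpa [ContinuousAt, maxRatio_self hx0] using
      (continuousAt_id (x := x)).maxRatio (continuousAt_const (y := x)) hx0
  have hright : Tendsto (fun y => maxRatio x y) (𝓝 x) (𝓝 1) := by
    simpa [ContinuousAt, maxRatio_self hx0] using
      (continuousAt_const (y := x)).maxRatio continuousAt_id hx0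
  have hup : Tendsto (fun y => max (maxRatio y x) 1 * f x) (𝓝 x) (𝓝 (f x)) := by
    simpa using (hleft.max (tendsto_const_nhds (x := 1))).mul_const (f x)
  have hlow : Tendsto (fun y => f x / max (maxRatio x y) 1) (𝓝 x) (𝓝 (f x)) := by
    simpa [Pi.div_def] using tendsto_const_nhds.div (hright.max (tendsto_const_nhds (x := 1))) (by simp)
  have hnhds : ∀ᶠ y in 𝓝 x, y ∈ PosCone N := (isOpen_posCone N).mem_nhds hx
  refine tendsto_of_tendsto_of_tendsto_of_le_of_le' hlow hup ?_ ?_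
  · filter_upwards [hnhds] with y hy
    rw [div_le_iff₀ (by positivity), mul_comm]
    exact hf.apply_le_max_maxRatio_mul hx hy
  · filter_upwards [hnhds] with y hy
    exact hf.apply_le_max_maxRatio_mul hy hx

end IsMSPFun

noncomputable def normalizedMap {N : ℕ} (nrm : (Fin N → ℝ) → ℝ) (T : (Fin N → ℝ) → Fin N → ℝ)
    (x : Fin N → ℝ) : Fin N → ℝ :=
  (nrm (T x))⁻¹ • T x

namespace IsMSPMap

variable {N : ℕ} {T : (Fin N → ℝ) → Fin N → ℝ} (hT : IsMSPMap T)
include hT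

theorem mem_posCone {x : Fin N → ℝ} (hx : x ∈ PosCone N) : T x ∈ PosCone N :=
  fun i => (hT i).1 x hx

variable [NeZero N]

theorem continuousOn : ContinuousOn T (PosCone N) :=
  continuousOn_pi.2 fun i => (hT i).continuousOn

theorem maxRatio_apply_le {x y : Fin N → ℝ} (hx : x ∈ PosCone N) (hy : y ∈ PosCone N)
    (h : 1 ≤ maxRatio x y) : maxRatio (T x) (T y) ≤ maxRatio x y :=
  (maxRatio_le_iff (hT.mem_posCone hy)).2 fun i => by
    simpa [max_eq_left h] using (hT i).apply_le_max_maxRatio_mul hx hy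

theorem maxRatio_apply_lt {x y : Fin N → ℝ} (hx : x ∈ PosCone N) (hy : y ∈ PosCone N)
    (h : 1 < maxRatio x y) : maxRatio (T x) (T y) < maxRatio x y :=
  (maxRatio_lt_iff (hT.mem_posCone hy)).2 fun i => (hT i).apply_lt_maxRatio_mul hx hy h

theorem hilbertGauge_apply_lt {x y : Fin N → ℝ} (hx : x ∈ PosCone N) (hy : y ∈ PosCone N)
    (hxy : x ≠ y) (h₁ : 1 ≤ maxRatio x y) (h₂ : 1 ≤ maxRatio y x) :
    hilbertGauge (T x) (T y) < hilbertGauge x y := by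
  have hTx := hT.mem_posCone hx
  have hTy := hT.mem_posCone hy
  obtain h | h : 1 < maxRatio x y ∨ 1 < maxRatio y x := by
    by_contra! h
    exact hxy (eq_of_maxRatio_le_one hx hy h.1 h.2)
  · exact mul_lt_mul (hT.maxRatio_apply_lt hx hy h) (hT.maxRatio_apply_le hy hx h₂)
      (maxRatio_pos hTy hTx) (maxRatio_pos hx hy).le
  · exact mul_lt_mul' (hT.maxRatio_apply_le hx hy h₁) (hT.maxRatio_apply_lt hy hx h)
      (maxRatio_pos hTy hTx).le (maxRatio_pos hx hy)

variable {nrm : (Fin N → ℝ) → ℝ} (hnrm : IsMonoNorm nrm)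
include hnrm

theorem normalizedMap_mem_posCone {x : Fin N → ℝ} (hx : x ∈ PosCone N) :
    normalizedMap nrm T x ∈ PosCone N :=
  fun i => mul_pos (inv_pos.2 (hnrm.pos_of_mem_posCone (hT.mem_posCone hx))) (hT.mem_posCone hx i)

theorem norm_normalizedMap {x : Fin N → ℝ} (hx : x ∈ PosCone N) :
    nrm (normalizedMap nrm T x) = 1 := by
  have hpos := hnrm.pos_of_mem_posCone (hT.mem_posCone hx)
  rw [normalizedMap, hnrm.smul_of_nonneg (inv_nonneg.2 hpos.le), inv_mul_cancel₀ hpos.ne']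

theorem hilbertGauge_normalizedMap {x y : Fin N → ℝ} (hx : x ∈ PosCone N) (hy : y ∈ PosCone N) :
    hilbertGauge (normalizedMap nrm T x) (normalizedMap nrm T y) = hilbertGauge (T x) (T y) :=
  hilbertGauge_smul_smul (inv_pos.2 (hnrm.pos_of_mem_posCone (hT.mem_posCone hx)))
    (inv_pos.2 (hnrm.pos_of_mem_posCone (hT.mem_posCone hy))) _ _

theorem continuousOn_normalizedMap : ContinuousOn (normalizedMap nrm T) (PosCone N) :=
  ((hnrm.continuous.comp_continuousOn hT.continuousOn).inv₀ fun _ hx =>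
    (hnrm.pos_of_mem_posCone (hT.mem_posCone hx)).ne').smul hT.continuousOn

theorem exists_normalizedMap_mem_Icc :
    ∃ lo hi : Fin N → ℝ, lo ∈ PosCone N ∧
      ∀ x ∈ PosCone N, nrm x = 1 → normalizedMap nrm T x ∈ Icc lo hi := by
  set c : Fin N → ℝ := fun i => sInf ((T · i) '' PosCone N)
  set u : Fin N → ℝ := fun j => 1 / nrm (Pi.single j 1)
  have hc : c ∈ PosCone N := fun i => (hT i).2.2.2
  have hcT : ∀ x ∈ PosCone N, c ≤ T x := fun x hx i => (hT i).sInf_le hx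
  have hsingle : ∀ j : Fin N, 0 < nrm (Pi.single j 1) := fun j => hnrm.pos (by simp)
  have hu : u ∈ PosCone N := fun j => one_div_pos.2 (hsingle j)
  have hxu : ∀ x ∈ PosCone N, nrm x = 1 → x ≤ u := fun x hx h1 j => by
    rw [le_div_iff₀ (hsingle j)]
    exact (hnrm.apply_mul_norm_single_le (fun i => (hx i).le) j).trans h1.le
  have hTu : ∀ x ∈ PosCone N, nrm x = 1 → T x ≤ T u := fun x hx h1 i =>
    (hT i).2.1 x u hx hu (hxu x hx h1)
  have hnc := hnrm.pos_of_mem_posCone hc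
  refine ⟨(nrm (T u))⁻¹ • c, (nrm c)⁻¹ • T u,
    fun i => mul_pos (inv_pos.2 (hnrm.pos_of_mem_posCone (hT.mem_posCone hu))) (hc i),
    fun x hx h1 => ?_⟩
  have hTx := hT.mem_posCone hx
  have hcx : nrm c ≤ nrm (T x) := hnrm.mono (fun i => (hc i).le) (hcT x hx)
  have hTxu : nrm (T x) ≤ nrm (T u) := hnrm.mono (fun i => (hTx i).le) (hTu x hx h1)
  have hγ : 0 < nrm (T x) := hnc.trans_le hcx
  exact ⟨smul_le_smul (inv_anti₀ hγ hTxu) (hcT x hx) (inv_pos.2 (hγ.trans_le hTxu)).le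
      fun i => (hTx i).le,
    smul_le_smul (inv_anti₀ hnc hcx) (hTu x hx h1) (inv_pos.2 hγ).le
      fun i => (hT.mem_posCone hu i).le⟩

theorem hilbertGauge_normalizedMap_lt {x : Fin N → ℝ} (hx : x ∈ PosCone N) (hx1 : nrm x = 1)
    (hSx : normalizedMap nrm T x ≠ x) :
    hilbertGauge (normalizedMap nrm T x) (normalizedMap nrm T (normalizedMap nrm T x)) <
      hilbertGauge x (normalizedMap nrm T x) := by
  have hS := hT.normalizedMap_mem_posCone hnrm hx
  have hS1 := hT.norm_normalizedMap hnrm hx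
  rw [hT.hilbertGauge_normalizedMap hnrm hx hS]
  exact hT.hilbertGauge_apply_lt hx hS hSx.symm (hnrm.one_le_maxRatio hx hS (hx1.trans hS1.symm))
    (hnrm.one_le_maxRatio hS hx (hS1.trans hx1.symm))

theorem exists_isFixedPt_normalizedMap :
    ∃ x ∈ PosCone N, nrm x = 1 ∧ Function.IsFixedPt (normalizedMap nrm T) x := by
  obtain ⟨lo, hi, hlo, hbox⟩ := hT.exists_normalizedMap_mem_Icc hnrm
  set S := normalizedMap nrm T
  set K := Icc lo hi ∩ {x | nrm x = 1}
  have hKpos : K ⊆ PosCone N := fun x hx i => (hlo i).trans_le (hx.1.1 i)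
  have hSK : ∀ x ∈ PosCone N, nrm x = 1 → S x ∈ K := fun x hx h1 =>
    ⟨hbox x hx h1, hT.norm_normalizedMap hnrm hx⟩
  have hK : IsCompact K := isCompact_Icc.inter_right (isClosed_eq hnrm.continuous continuous_const)
  have h1 : (1 : Fin N → ℝ) ∈ PosCone N := fun _ => one_pos
  have hKne : K.Nonempty := ⟨S (S 1), hSK _ (hT.normalizedMap_mem_posCone hnrm h1)
    (hT.norm_normalizedMap hnrm h1)⟩
  have hg : ContinuousOn (fun x => hilbertGauge x (S x)) K :=
    continuousOn_id.hilbertGauge ((hT.continuousOn_normalizedMap hnrm).mono hKpos)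
      (fun x hx i => (hKpos hx i).ne')
      fun x hx i => (hT.normalizedMap_mem_posCone hnrm (hKpos hx) i).ne'
  obtain ⟨x, hxK, hfix⟩ := hK.exists_isFixedPt_of_lt hKne (fun x hx => hSK x (hKpos hx) hx.2) hg
    fun x hx => hT.hilbertGauge_normalizedMap_lt hnrm (hKpos hx) hx.2
  exact ⟨x, hKpos hxK, hxK.2, hfix⟩

theorem eq_of_apply_eq_smul {x y : Fin N → ℝ} (hx : x ∈ PosCone N) (hy : y ∈ PosCone N)
    (hxy : nrm x = nrm y) {a b : ℝ} (ha : 0 < a) (hb : 0 < b) (hTx : T x = a • x)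
    (hTy : T y = b • y) : x = y := by
  by_contra hne
  have hlt := hT.hilbertGauge_apply_lt hx hy hne (hnrm.one_le_maxRatio hx hy hxy)
    (hnrm.one_le_maxRatio hy hx hxy.symm)
  rw [hTx, hTy, hilbertGauge_smul_smul ha hb] at hlt
  exact hlt.false

end IsMSPMap

/-- Proposition 1 (existence and uniqueness of the conditional eigenpair): for an MSP
mapping `T` and a monotone norm, there is exactly one pair `(γ, x) ∈ ℝ₊₊ × ℝ₊₊^N`
with `T x = γ • x` and `‖x‖ = 1`. -/
theorem stmt2 {N : ℕ} (hN : 0 < N) (T : (Fin N → ℝ) → (Fin N → ℝ)) (hT : IsMSPMap T)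
    (nrm : (Fin N → ℝ) → ℝ) (hnrm : IsMonoNorm nrm) :
    ∃! p : ℝ × (Fin N → ℝ),
      (0 < p.1 ∧ (∀ i, 0 < p.2 i)) ∧ T p.2 = p.1 • p.2 ∧ nrm p.2 = 1 := by
  have : NeZero N := ⟨hN.ne'⟩
  obtain ⟨x, hx, hx1, hfix⟩ := hT.exists_isFixedPt_normalizedMap hnrm
  have hγ : 0 < nrm (T x) := hnrm.pos_of_mem_posCone (hT.mem_posCone hx)
  have hTx : T x = nrm (T x) • x := (inv_smul_eq_iff₀ hγ.ne').1 hfix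
  refine ⟨(nrm (T x), x), ⟨⟨hγ, hx⟩, hTx, hx1⟩, ?_⟩
  rintro ⟨μ, y⟩ ⟨⟨hμ, hy⟩, hTy, hy1⟩
  obtain rfl : y = x := hT.eq_of_apply_eq_smul hnrm hy hx (hy1.trans hx1.symm) hμ hγ hTy hTx
  have hμ' : nrm (T y) = μ := by rw [hTy, hnrm.smul_of_nonneg hμ.le, hy1, mul_one]
  rw [hμ']
end

section
/- Let (Ω, F, P) be a probability space, and let g : ℝ₊₊^N × Ω → ℝ₊₊ and h : ℝ₊₊^N → ℝ₊₊ be functions such that, for almost every ω ∈ Ω, the function q_ω : ℝ₊₊^N → ℝ₊₊ defined by q_ω(x) = h(x)/g(x,ω) is an MSP function. Assume there exists a random variable δ : Ω → ℝ₊₊ such that for every x ∈ ℝ₊₊^N one has h(x)/g(x,ω) ≥ δ(ω) > 0 for almost every ω ∈ Ω, that E[1/δ(ω)] is finite, and that for every x ∈ ℝ₊₊^N the expectation E[g(x,ω)] = ∫ g(x,ω) P(dω) is well defined and finite. Then the function f : ℝ₊₊^N → ℝ₊₊ given by f(x) = h(x)/E[g(x,ω)] is an MSP function. -/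
open MeasureTheory Filter

/-- Proposition 2: if, for almost every `ω`, `x ↦ h(x)/g(x,ω)` is an MSP function,
the quotients are a.e. bounded below by a positive random variable `δ` with integrable
reciprocal, and `E[g(x,ω)]` is well defined and finite for every `x` in the positive
cone, then `x ↦ h(x) / E[g(x,ω)]` is an MSP function. -/
theorem stmt5 {N : ℕ} {Ω : Type*} [MeasurableSpace Ω]
    (P : Measure Ω) [IsProbabilityMeasure P]
    (g : (Fin N → ℝ) → Ω → ℝ) (h : (Fin N → ℝ) → ℝ) (δ : Ω → ℝ)
    (hh : ∀ x : Fin N → ℝ, (∀ i, 0 < x i) → 0 < h x)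
    (hgpos : ∀ᵐ ω ∂P, ∀ x : Fin N → ℝ, (∀ i, 0 < x i) → 0 < g x ω)
    (hMSP : ∀ᵐ ω ∂P, IsMSPFun (fun x => h x / g x ω))
    (hδpos : ∀ᵐ ω ∂P, 0 < δ ω)
    (hδ : ∀ x : Fin N → ℝ, (∀ i, 0 < x i) → ∀ᵐ ω ∂P, δ ω ≤ h x / g x ω)
    (hδint : Integrable (fun ω => (δ ω)⁻¹) P)
    (hgint : ∀ x : Fin N → ℝ, (∀ i, 0 < x i) → Integrable (fun ω => g x ω) P) :
    IsMSPFun (fun x => h x / ∫ ω, g x ω ∂P) := by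

  -- Positivity of integrals of a.e.-positive integrable functions
  have key : ∀ F : Ω → ℝ, Integrable F P → (∀ᵐ ω ∂P, 0 < F ω) → 0 < ∫ ω, F ω ∂P := by
    intro F hFi hFpos
    rw [integral_pos_iff_support_of_nonneg_ae (hFpos.mono fun ω hω => hω.le) hFi]
    have h0 : P {ω | ¬ (0 < F ω)} = 0 := hFpos
    have hsub : (Function.support F)ᶜ ⊆ {ω | ¬ (0 < F ω)} := by
      intro ω hω
      simp only [Function.mem_support, Set.mem_compl_iff, not_not] at hω
      simp [hω]
    have h1 : (1 : ENNReal) ≤ P (Function.support F) := by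
      calc (1 : ENNReal) = P Set.univ := measure_univ.symm
        _ = P (Function.support F ∪ (Function.support F)ᶜ) := by
            rw [Set.union_compl_self]
        _ ≤ P (Function.support F) + P (Function.support F)ᶜ := measure_union_le _ _
        _ = P (Function.support F) := by rw [measure_mono_null hsub h0, add_zero]
    exact lt_of_lt_of_le (by norm_num) h1
  have intpos : ∀ x : Fin N → ℝ, (∀ i, 0 < x i) → 0 < ∫ ω, g x ω ∂P := by
    intro x hx
    exact key _ (hgint x hx) (hgpos.mono fun ω hω => hω x hx)
  refine ⟨?_, ?_, ?_, ?_⟩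
  · intro x hx
    exact div_pos (hh x hx) (intpos x hx)
  · -- monotonicity
    intro x y hx hy hxy
    have hmono : ∫ ω, h x * g y ω ∂P ≤ ∫ ω, h y * g x ω ∂P := by
      refine integral_mono_ae ((hgint y hy).const_mul _) ((hgint x hx).const_mul _) ?_
      filter_upwards [hMSP, hgpos] with ω hM hg
      have hgx := hg x hx
      have hgy := hg y hy
      have := hM.2.1 x y hx hy hxy
      simp only at this
      exact (div_le_div_iff₀ hgx hgy).mp this
    rw [div_le_div_iff₀ (intpos x hx) (intpos y hy)]
    rw [integral_const_mul] at hmono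
    rw [integral_const_mul] at hmono
    linarith
  · -- scalability
    intro α hα x hx
    have hαx : ∀ i, 0 < (α • x) i := fun i => by
      have := hx i
      have : 0 < α * x i := mul_pos (lt_trans one_pos hα) (hx i)
      simpa using this
    have hstrict : ∫ ω, h (α • x) * g x ω ∂P < ∫ ω, α * h x * g (α • x) ω ∂P := by
      have hd : 0 < ∫ ω, (α * h x * g (α • x) ω - h (α • x) * g x ω) ∂P := by
        refine key _ (((hgint _ hαx).const_mul _).sub ((hgint x hx).const_mul _)) ?_
        filter_upwards [hMSP, hgpos] with ω hM hg
        have hgx := hg x hx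
        have hgαx := hg _ hαx
        have h2 := hM.2.2.1 α hα x hx
        simp only at h2
        rw [mul_div_assoc'] at h2
        have := (div_lt_div_iff₀ hgαx hgx).mp h2
        linarith
      rw [integral_sub (((hgint _ hαx).const_mul _)) ((hgint x hx).const_mul _)] at hd
      linarith
    rw [integral_const_mul, integral_const_mul] at hstrict
    rw [mul_div_assoc']
    rw [div_lt_div_iff₀ (intpos _ hαx) (intpos x hx)]
    linarith
  · -- positive infimum
    have hδintpos : 0 < ∫ ω, (δ ω)⁻¹ ∂P :=
      key _ hδint (hδpos.mono fun ω hω => inv_pos.mpr hω)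
    have hbound : ∀ x : Fin N → ℝ, (∀ i, 0 < x i) →
        (∫ ω, (δ ω)⁻¹ ∂P)⁻¹ ≤ h x / ∫ ω, g x ω ∂P := by
      intro x hx
      have hgle : ∫ ω, g x ω ∂P ≤ h x * ∫ ω, (δ ω)⁻¹ ∂P := by
        rw [← integral_const_mul]
        refine integral_mono_ae (hgint x hx) (hδint.const_mul _) ?_
        filter_upwards [hδ x hx, hδpos, hgpos] with ω h1 h2 h3
        have hgx := h3 x hx
        have hdg : δ ω * g x ω ≤ h x := by
          rw [le_div_iff₀ hgx] at h1
          exact h1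
        have : g x ω ≤ h x / δ ω := (le_div_iff₀ h2).mpr (by nlinarith)
        simpa [div_eq_mul_inv] using this
      rw [le_div_iff₀ (intpos x hx)]
      calc (∫ ω, (δ ω)⁻¹ ∂P)⁻¹ * ∫ ω, g x ω ∂P
          ≤ (∫ ω, (δ ω)⁻¹ ∂P)⁻¹ * (h x * ∫ ω, (δ ω)⁻¹ ∂P) := by
            exact mul_le_mul_of_nonneg_left hgle (inv_nonneg.mpr hδintpos.le)
        _ = h x := by
            rw [inv_mul_eq_div, mul_div_assoc, div_self hδintpos.ne', mul_one]
    refine lt_of_lt_of_le (inv_pos.mpr hδintpos) ?_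
    refine le_csInf ⟨h (fun _ => 1) / ∫ ω, g (fun _ => 1) ω ∂P, ⟨fun _ => 1, fun i => one_pos, rfl⟩⟩ ?_
    rintro b ⟨x, hx, rfl⟩
    exact hbound x hx
end

section
/- Let (Ω, F, P) be a probability space, and let g : ℝ₊₊^N × Ω → ℝ₊₊ and h : ℝ₊₊^N → ℝ₊₊ be functions such that, for almost every ω ∈ Ω, the function x ↦ h(x)/g(x,ω) is an MSP function, and such that for every x ∈ ℝ₊₊^N the expectation E[g(x,ω)] is well defined, finite, and positive. Then for all x, y ∈ ℝ₊₊^N with x ≤ y coordinatewise, h(x)/E[g(x,ω)] ≤ h(y)/E[g(y,ω)]; that is, the function f(x) = h(x)/E[g(x,ω)] is monotone. -/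
open MeasureTheory Filter

/-- Monotonicity part of Proposition 2: if for almost every `ω` the function
`x ↦ h(x)/g(x,ω)` is an MSP function and `E[g(x,ω)]` is well defined, finite and
positive on the positive cone, then `x ↦ h(x)/E[g(x,ω)]` is monotone on the cone. -/
theorem stmt6 {N : ℕ} {Ω : Type*} [MeasurableSpace Ω]
    (P : Measure Ω) [IsProbabilityMeasure P]
    (g : (Fin N → ℝ) → Ω → ℝ) (h : (Fin N → ℝ) → ℝ)
    (hh : ∀ x : Fin N → ℝ, (∀ i, 0 < x i) → 0 < h x)
    (hgpos : ∀ᵐ ω ∂P, ∀ x : Fin N → ℝ, (∀ i, 0 < x i) → 0 < g x ω)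
    (hMSP : ∀ᵐ ω ∂P, IsMSPFun (fun x => h x / g x ω))
    (hgint : ∀ x : Fin N → ℝ, (∀ i, 0 < x i) → Integrable (fun ω => g x ω) P)
    (hgintpos : ∀ x : Fin N → ℝ, (∀ i, 0 < x i) → 0 < ∫ ω, g x ω ∂P) :
    ∀ x y : Fin N → ℝ, (∀ i, 0 < x i) → (∀ i, 0 < y i) → x ≤ y →
      h x / ∫ ω, g x ω ∂P ≤ h y / ∫ ω, g y ω ∂P := by
  intro x y hx hy hxy
  rw [div_le_div_iff₀ (hgintpos x hx) (hgintpos y hy)]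
  have key : ∀ᵐ ω ∂P, h x * g y ω ≤ h y * g x ω := by
    filter_upwards [hgpos, hMSP] with ω hpos hmsp
    have hgx := hpos x hx
    have hgy := hpos y hy
    have := hmsp.2.1 x y hx hy hxy
    calc h x * g y ω = (h x / g x ω) * g x ω * g y ω := by field_simp
    _ ≤ (h y / g y ω) * g x ω * g y ω := by
        apply mul_le_mul_of_nonneg_right (mul_le_mul_of_nonneg_right this hgx.le) hgy.le
    _ = h y * g x ω := by field_simp
  have := integral_mono_ae ((hgint y hy).const_mul (h x)) ((hgint x hx).const_mul (h y)) key
  rwa [integral_const_mul, integral_const_mul] at this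
end

section
/- Let (Ω, F, P) be a probability space, and let g : ℝ₊₊^N × Ω → ℝ₊₊ and h : ℝ₊₊^N → ℝ₊₊ be functions such that, for almost every ω ∈ Ω, the function x ↦ h(x)/g(x,ω) is an MSP function, and such that for every x ∈ ℝ₊₊^N the expectation E[g(x,ω)] is well defined, finite, and positive. Then for every α > 1 and every x ∈ ℝ₊₊^N, h(αx)/E[g(αx,ω)] < α · h(x)/E[g(x,ω)]; that is, the function f(x) = h(x)/E[g(x,ω)] is scalable. -/
/-!
Clearing the positive denominators turns the scalability of `x ↦ h x / g x ω` into the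
pointwise inequality `h (α • x) * g x ω < α * h x * g (α • x) ω`, which is linear in `g`.
It holds almost surely, so it survives taking expectations strictly, and dividing back by the
positive expectations gives scalability of `x ↦ h x / E[g x]`.
-/

open MeasureTheory Filter

lemma IsMSPFun.map_smul_lt {N : ℕ} {f : (Fin N → ℝ) → ℝ} (hf : IsMSPFun f) {α : ℝ}
    (hα : 1 < α) {x : Fin N → ℝ} (hx : ∀ i, 0 < x i) : f (α • x) < α * f x :=
  hf.2.2.1 α hα x hx

lemma div_lt_mul_div_iff {a b c d α : ℝ} (hb : 0 < b) (hd : 0 < d) :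
    a / b < α * (c / d) ↔ a * d < α * c * b := by
  rw [← mul_div_assoc, div_lt_div_iff₀ hb hd]

lemma integral_lt_integral_of_ae_lt {α : Type*} [MeasurableSpace α] {μ : Measure α}
    {f g : α → ℝ} (hμ : μ ≠ 0) (hf : Integrable f μ) (hg : Integrable g μ)
    (hlt : ∀ᵐ x ∂μ, f x < g x) : ∫ x, f x ∂μ < ∫ x, g x ∂μ := by
  rw [← sub_pos, ← integral_sub hg hf,
    integral_pos_iff_support_of_nonneg_ae (hlt.mono fun x hx => sub_nonneg.2 hx.le) (hg.sub hf),
    pos_iff_ne_zero]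
  intro hnull
  have hfalse : ∀ᵐ x ∂μ, False := by
    filter_upwards [hlt, measure_eq_zero_iff_ae_notMem.1 hnull] with x hx hx0
    exact hx0 (sub_pos.2 hx).ne'
  exact hμ (ae_eq_bot.1 (eventually_false_iff_eq_bot.1 hfalse))

theorem stmt7_general {N : ℕ} {Ω : Type*} [MeasurableSpace Ω]
    (P : Measure Ω)
    (g : (Fin N → ℝ) → Ω → ℝ) (h : (Fin N → ℝ) → ℝ)
    (hgpos : ∀ᵐ ω ∂P, ∀ x : Fin N → ℝ, (∀ i, 0 < x i) → 0 < g x ω)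
    (hMSP : ∀ᵐ ω ∂P, IsMSPFun (fun x => h x / g x ω))
    (hgint : ∀ x : Fin N → ℝ, (∀ i, 0 < x i) → Integrable (fun ω => g x ω) P)
    (hgintpos : ∀ x : Fin N → ℝ, (∀ i, 0 < x i) → 0 < ∫ ω, g x ω ∂P) :
    ∀ α : ℝ, 1 < α → ∀ x : Fin N → ℝ, (∀ i, 0 < x i) →
      h (α • x) / ∫ ω, g (α • x) ω ∂P < α * (h x / ∫ ω, g x ω ∂P) := by
  intro α hα x hx
  have hαx : ∀ i, 0 < (α • x) i := fun i => mul_pos (zero_lt_one.trans hα) (hx i)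
  have hP : P ≠ 0 := fun hP => by simpa [hP] using hgintpos x hx
  rw [div_lt_mul_div_iff (hgintpos _ hαx) (hgintpos x hx), ← integral_const_mul,
    ← integral_const_mul]
  refine integral_lt_integral_of_ae_lt hP ((hgint x hx).const_mul _)
    ((hgint _ hαx).const_mul _) ?_
  filter_upwards [hgpos, hMSP] with ω hg hf
  exact (div_lt_mul_div_iff (hg _ hαx) (hg x hx)).1 (hf.map_smul_lt hα hx)

/-- Scalability part of Proposition 2: if for almost every `ω` the function
`x ↦ h(x)/g(x,ω)` is an MSP function and `E[g(x,ω)]` is well defined, finite and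
positive on the positive cone, then `x ↦ h(x)/E[g(x,ω)]` is scalable:
`h(αx)/E[g(αx,ω)] < α ⬝ h(x)/E[g(x,ω)]` for every `α > 1` and `x ∈ ℝ₊₊^N`. -/
theorem stmt7 {N : ℕ} {Ω : Type*} [MeasurableSpace Ω]
    (P : Measure Ω) [IsProbabilityMeasure P]
    (g : (Fin N → ℝ) → Ω → ℝ) (h : (Fin N → ℝ) → ℝ)
    (hh : ∀ x : Fin N → ℝ, (∀ i, 0 < x i) → 0 < h x)
    (hgpos : ∀ᵐ ω ∂P, ∀ x : Fin N → ℝ, (∀ i, 0 < x i) → 0 < g x ω)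
    (hMSP : ∀ᵐ ω ∂P, IsMSPFun (fun x => h x / g x ω))
    (hgint : ∀ x : Fin N → ℝ, (∀ i, 0 < x i) → Integrable (fun ω => g x ω) P)
    (hgintpos : ∀ x : Fin N → ℝ, (∀ i, 0 < x i) → 0 < ∫ ω, g x ω ∂P) :
    ∀ α : ℝ, 1 < α → ∀ x : Fin N → ℝ, (∀ i, 0 < x i) →
      h (α • x) / ∫ ω, g (α • x) ω ∂P < α * (h x / ∫ ω, g x ω ∂P) :=
  stmt7_general P g h hgpos hMSP hgint hgintpos
end

section
/- Let (Ω, F, P) be a probability space, and let g : ℝ₊₊^N × Ω → ℝ₊₊ and h : ℝ₊₊^N → ℝ₊₊ be functions such that, for almost every ω ∈ Ω, the function x ↦ h(x)/g(x,ω) is an MSP function. Assume there exists a random variable δ : Ω → ℝ₊₊ such that for every x ∈ ℝ₊₊^N one has h(x)/g(x,ω) ≥ δ(ω) > 0 for almost every ω ∈ Ω, that E[1/δ(ω)] is finite, and that for every x ∈ ℝ₊₊^N the expectation E[g(x,ω)] is well defined, finite, and positive. Then inf_{x ∈ ℝ₊₊^N} h(x)/E[g(x,ω)] ≥ (E[1/δ(ω)])^{-1}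 > 0. -/
open MeasureTheory Filter

/-- Positivity part of Proposition 2: under the a.e. MSP hypothesis and the uniform
lower bound `h(x)/g(x,ω) ≥ δ(ω) > 0` with `E[1/δ]` finite, the infimum of
`x ↦ h(x)/E[g(x,ω)]` over the positive cone is at least `(E[1/δ])⁻¹ > 0`. -/
theorem stmt8 {N : ℕ} {Ω : Type*} [MeasurableSpace Ω]
    (P : Measure Ω) [IsProbabilityMeasure P]
    (g : (Fin N → ℝ) → Ω → ℝ) (h : (Fin N → ℝ) → ℝ) (δ : Ω → ℝ)
    (hh : ∀ x : Fin N → ℝ, (∀ i, 0 < x i) → 0 < h x)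
    (hgpos : ∀ᵐ ω ∂P, ∀ x : Fin N → ℝ, (∀ i, 0 < x i) → 0 < g x ω)
    (hMSP : ∀ᵐ ω ∂P, IsMSPFun (fun x => h x / g x ω))
    (hδpos : ∀ᵐ ω ∂P, 0 < δ ω)
    (hδ : ∀ x : Fin N → ℝ, (∀ i, 0 < x i) → ∀ᵐ ω ∂P, δ ω ≤ h x / g x ω)
    (hδint : Integrable (fun ω => (δ ω)⁻¹) P)
    (hgint : ∀ x : Fin N → ℝ, (∀ i, 0 < x i) → Integrable (fun ω => g x ω) P)
    (hgintpos : ∀ x : Fin N → ℝ, (∀ i, 0 < x i) → 0 < ∫ ω, g x ω ∂P) :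
    0 < (∫ ω, (δ ω)⁻¹ ∂P)⁻¹ ∧
    (∫ ω, (δ ω)⁻¹ ∂P)⁻¹ ≤ sInf ((fun x => h x / ∫ ω, g x ω ∂P) '' PosCone N) := by
  set I := ∫ ω, (δ ω)⁻¹ ∂P with hI
  have hinv_nonneg : ∀ᵐ ω ∂P, 0 ≤ (δ ω)⁻¹ :=
    hδpos.mono fun ω hω => le_of_lt (inv_pos.mpr hω)
  have hIpos : 0 < I := by
    rw [hI, integral_pos_iff_support_of_nonneg_ae hinv_nonneg hδint]
    have hcompl : P (Function.support fun ω => (δ ω)⁻¹)ᶜ = 0 := by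
      have hae : ∀ᵐ ω ∂P, (δ ω)⁻¹ ≠ 0 :=
        hδpos.mono fun ω hω => ne_of_gt (inv_pos.mpr hω)
      simpa [Function.support, Set.compl_setOf] using ae_iff.mp hae
    have h1 : (1 : ENNReal) ≤ P (Function.support fun ω => (δ ω)⁻¹) := by
      calc (1 : ENNReal) = P Set.univ := measure_univ.symm
        _ ≤ P (Function.support fun ω => (δ ω)⁻¹) +
            P (Function.support fun ω => (δ ω)⁻¹)ᶜ := by
            rw [← Set.union_compl_self (Function.support fun ω => (δ ω)⁻¹)]
            exact measure_union_le _ _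
        _ = P (Function.support fun ω => (δ ω)⁻¹) := by rw [hcompl, add_zero]
    exact lt_of_lt_of_le zero_lt_one h1
  refine ⟨inv_pos.mpr hIpos, ?_⟩
  apply le_csInf
  · exact ⟨h (fun _ => 1) / ∫ ω, g (fun _ => 1) ω ∂P,
      ⟨fun _ => 1, fun i => one_pos, rfl⟩⟩
  rintro b ⟨x, hx, rfl⟩
  have hxpos : ∀ i, 0 < x i := hx
  have hhx : 0 < h x := hh x hxpos
  -- key: g x ω ≤ h x * (δ ω)⁻¹ a.e.
  have hbound : ∀ᵐ ω ∂P, g x ω ≤ h x * (δ ω)⁻¹ := by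
    filter_upwards [hδ x hxpos, hδpos, hgpos] with ω h1 h2 h3
    have hg : 0 < g x ω := h3 x hxpos
    have : δ ω * g x ω ≤ h x := by
      rw [le_div_iff₀ hg] at h1
      exact h1
    calc g x ω = (δ ω * g x ω) * (δ ω)⁻¹ := by
          field_simp
        _ ≤ h x * (δ ω)⁻¹ := by
          exact mul_le_mul_of_nonneg_right this (le_of_lt (inv_pos.mpr h2))
  have hEg : ∫ ω, g x ω ∂P ≤ h x * I := by
    have := integral_mono_ae (hgint x hxpos) (hδint.const_mul (h x)) hbound
    simpa [hI, integral_const_mul] using this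
  have hEgpos : 0 < ∫ ω, g x ω ∂P := hgintpos x hxpos
  rw [inv_eq_one_div, div_le_div_iff₀ hIpos hEgpos]
  calc 1 * ∫ ω, g x ω ∂P = ∫ ω, g x ω ∂P := one_mul _
    _ ≤ h x * I := hEg
end

section
/- Let (Ω, F, P) be a probability space, let K, N ∈ ℕ, let σ² > 0, fix a user index u ∈ {1,…,N}, and let h₁,…,h_N : Ω → ℂ^K and v_u : Ω → ℂ^K be random vectors. Define the instantaneous SINR s_u : ℝ₊₊^N × Ω → ℝ₊ by s_u(p, ω) = p_u |h_u(ω)^H v_u(ω)|² / (∑_{k ≠ u} p_k |h_k(ω)^H v_u(ω)|² + σ²). Suppose that for almost every ω ∈ Ω one has |h_u(ω)^H v_u(ω)| ≠ 0. Then for almost every ω ∈ Ω, the function p ↦ p_u / log(1 + s_u(p, ω)) is an MSP function on ℝ₊₊^N. -/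
/-!
Fix `ω` with `g := |h_u(ω)ᴴ v_u(ω)|² > 0`. Then `s_u(p, ω) = p_u / D p`, where
`D p = (∑_{k ≠ u} p_k |h_k(ω)ᴴ v_u(ω)|² + σ²) / g` is affine with nonnegative coefficients and a
positive constant, hence itself MSP. The function `(t, d) ↦ t / log (1 + t / d)` is increasing in
both arguments (in `t` by Bernoulli's inequality), homogeneous of degree one and bounded below
by `d` (as `log (1 + x) ≤ x`), so composing it with `p ↦ (p_u, D p)` preserves all MSP properties.
-/

open MeasureTheory Filter

/-- `chGain a b = |aᴴ b|`, the modulus of the inner product between the aggregated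
channel `a` and the beamformer `b` (conjugate-transpose convention). -/
noncomputable def chGain {K : ℕ} (a b : Fin K → ℂ) : ℝ :=
  ‖∑ i, (starRingEnd ℂ) (a i) * b i‖

/-- The instantaneous SINR of user `u` at power vector `p` and sample `ω`. -/
noncomputable def instSINR {K N : ℕ} {Ω : Type*}
    (hch : Fin N → Ω → (Fin K → ℂ)) (v : Ω → (Fin K → ℂ)) (σsq : ℝ) (u : Fin N)
    (p : Fin N → ℝ) (ω : Ω) : ℝ :=
  p u * chGain (hch u ω) (v ω) ^ 2 /
    (∑ k ∈ Finset.univ.erase u, p k * chGain (hch k ω) (v ω) ^ 2 + σsq)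

lemma sInf_image_posCone_pos {N : ℕ} {f : (Fin N → ℝ) → ℝ} {c : ℝ} (hc : 0 < c)
    (hf : ∀ x ∈ PosCone N, c ≤ f x) : 0 < sInf (f '' PosCone N) :=
  hc.trans_le <| le_csInf (Set.Nonempty.image f ⟨fun _ => 1, fun _ => one_pos⟩) <| by
    rintro _ ⟨x, hx, rfl⟩
    exact hf x hx

lemma isMSPFun_sum_mul_add_const {N : ℕ} (s : Finset (Fin N)) {w : Fin N → ℝ}
    (hw : ∀ k, 0 ≤ w k) {c : ℝ} (hc : 0 < c) :
    IsMSPFun (fun p : Fin N → ℝ => ∑ k ∈ s, w k * p k + c) := by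
  have sum_nonneg : ∀ p : Fin N → ℝ, (∀ i, 0 < p i) → 0 ≤ ∑ k ∈ s, w k * p k :=
    fun p hp => Finset.sum_nonneg fun k _ => mul_nonneg (hw k) (hp k).le
  refine ⟨fun p hp => by linarith [sum_nonneg p hp], ?_, ?_, ?_⟩
  · intro x y _ _ hxy
    have : ∑ k ∈ s, w k * x k ≤ ∑ k ∈ s, w k * y k :=
      Finset.sum_le_sum fun k _ => mul_le_mul_of_nonneg_left (hxy k) (hw k)
    linarith
  · intro α hα x hx
    have hsmul : ∑ k ∈ s, w k * (α • x) k = α * ∑ k ∈ s, w k * x k := by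
      simp only [Pi.smul_apply, smul_eq_mul, Finset.mul_sum]
      exact Finset.sum_congr rfl fun k _ => by ring
    show ∑ k ∈ s, w k * (α • x) k + c < α * (∑ k ∈ s, w k * x k + c)
    rw [hsmul]
    nlinarith [sum_nonneg x hx]
  · exact sInf_image_posCone_pos hc fun p hp => by linarith [sum_nonneg p hp]

section DivLog

variable {t t' d d' : ℝ}

lemma div_log_one_add_div_pos (ht : 0 < t) (hd : 0 < d) : 0 < t / Real.log (1 + t / d) :=
  div_pos ht <| Real.log_pos <| by linarith [div_pos ht hd]

lemma le_div_log_one_add_div (ht : 0 < t) (hd : 0 < d) : d ≤ t / Real.log (1 + t / d) := by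
  have htd : 0 < t / d := div_pos ht hd
  have hlog_pos : 0 < Real.log (1 + t / d) := Real.log_pos (by linarith)
  have hlog_le : Real.log (1 + t / d) ≤ t / d := by
    linarith [Real.log_le_sub_one_of_pos (x := 1 + t / d) (by linarith)]
  rw [le_div_iff₀ hlog_pos]
  calc d * Real.log (1 + t / d) ≤ d * (t / d) := mul_le_mul_of_nonneg_left hlog_le hd.le
    _ = t := by field_simp

lemma div_log_one_add_div_le_left (hd : 0 < d) (ht : 0 < t) (htt' : t ≤ t') :
    t / Real.log (1 + t / d) ≤ t' / Real.log (1 + t' / d) := by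
  have ht' : 0 < t' := ht.trans_le htt'
  have hx : 0 < t / d := div_pos ht hd
  have hlog_pos : 0 < Real.log (1 + t / d) := Real.log_pos (by linarith)
  have hlog'_pos : 0 < Real.log (1 + t' / d) := Real.log_pos (by linarith [div_pos ht' hd])
  have bernoulli : 1 + t' / d ≤ (1 + t / d) ^ (t' / t) := by
    calc 1 + t' / d = 1 + t' / t * (t / d) := by field_simp
      _ ≤ (1 + t / d) ^ (t' / t) :=
        one_add_mul_self_le_rpow_one_add (by linarith) ((one_le_div ht).2 htt')
  have hlog_le : Real.log (1 + t' / d) ≤ t' / t * Real.log (1 + t / d) := by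
    calc Real.log (1 + t' / d) ≤ Real.log ((1 + t / d) ^ (t' / t)) :=
          Real.log_le_log (by linarith [div_pos ht' hd]) bernoulli
      _ = t' / t * Real.log (1 + t / d) := Real.log_rpow (by linarith) _
  rw [div_le_div_iff₀ hlog_pos hlog'_pos]
  calc t * Real.log (1 + t' / d) ≤ t * (t' / t * Real.log (1 + t / d)) :=
        mul_le_mul_of_nonneg_left hlog_le ht.le
    _ = t' * Real.log (1 + t / d) := by field_simp

lemma div_log_one_add_div_lt_right (ht : 0 < t) (hd : 0 < d) (hdd' : d < d') :
    t / Real.log (1 + t / d) < t / Real.log (1 + t / d') := by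
  have hd' : 0 < d' := hd.trans hdd'
  apply div_lt_div_of_pos_left ht (Real.log_pos (by linarith [div_pos ht hd']))
  exact Real.log_lt_log (by linarith [div_pos ht hd'])
    (by linarith [div_lt_div_of_pos_left ht hd hdd'])

lemma div_log_one_add_div_le_right (ht : 0 < t) (hd : 0 < d) (hdd' : d ≤ d') :
    t / Real.log (1 + t / d) ≤ t / Real.log (1 + t / d') := by
  rcases hdd'.eq_or_lt with rfl | hlt
  · exact le_rfl
  · exact (div_log_one_add_div_lt_right ht hd hlt).le

lemma div_log_one_add_div_mul_mul (α : ℝ) (hα : α ≠ 0) :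
    α * t / Real.log (1 + α * t / (α * d)) = α * (t / Real.log (1 + t / d)) := by
  rw [mul_div_mul_left _ _ hα, mul_div_assoc]

end DivLog

lemma IsMSPFun.div_log_one_add_div {N : ℕ} {D : (Fin N → ℝ) → ℝ} (hD : IsMSPFun D)
    (u : Fin N) : IsMSPFun (fun p : Fin N → ℝ => p u / Real.log (1 + p u / D p)) := by
  obtain ⟨hD_pos, hD_mono, hD_scal, hD_inf⟩ := hD
  refine ⟨fun p hp => div_log_one_add_div_pos (hp u) (hD_pos p hp), ?_, ?_, ?_⟩
  · intro x y hx hy hxy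
    exact (div_log_one_add_div_le_left (hD_pos x hx) (hx u) (hxy u)).trans
      (div_log_one_add_div_le_right (hy u) (hD_pos x hx) (hD_mono x y hx hy hxy))
  · intro α hα x hx
    have hα0 : 0 < α := one_pos.trans hα
    have hαx : ∀ i, 0 < (α • x) i := fun i => by simpa using mul_pos hα0 (hx i)
    calc (α • x) u / Real.log (1 + (α • x) u / D (α • x))
        < α * x u / Real.log (1 + α * x u / (α * D x)) := by
          simpa using div_log_one_add_div_lt_right (hαx u) (hD_pos _ hαx) (hD_scal α hα x hx)
      _ = α * (x u / Real.log (1 + x u / D x)) := div_log_one_add_div_mul_mul α hα0.ne'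
  · refine sInf_image_posCone_pos hD_inf fun p hp => ?_
    have hbdd : BddBelow (D '' PosCone N) := ⟨0, by rintro _ ⟨q, hq, rfl⟩; exact (hD_pos q hq).le⟩
    exact (csInf_le hbdd ⟨p, hp, rfl⟩).trans
      (le_div_log_one_add_div (hp u) (hD_pos p hp))

theorem stmt9_general {K N : ℕ} {Ω : Type*} [MeasurableSpace Ω]
    (P : Measure Ω)
    (σsq : ℝ) (hσ : 0 < σsq) (u : Fin N)
    (hch : Fin N → Ω → (Fin K → ℂ)) (v : Ω → (Fin K → ℂ))
    (hne : ∀ᵐ ω ∂P, chGain (hch u ω) (v ω) ≠ 0) :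
    ∀ᵐ ω ∂P, IsMSPFun
      (fun p : Fin N → ℝ => p u / Real.log (1 + instSINR hch v σsq u p ω)) := by
  filter_upwards [hne] with ω hω
  set g : Fin N → ℝ := fun k => chGain (hch k ω) (v ω) ^ 2
  have hg : 0 < g u := pow_pos ((norm_nonneg _).lt_of_ne' hω) 2
  set D : (Fin N → ℝ) → ℝ := fun p => ∑ k ∈ Finset.univ.erase u, g k / g u * p k + σsq / g u
  have hD : IsMSPFun D :=
    isMSPFun_sum_mul_add_const _ (fun k => div_nonneg (sq_nonneg _) hg.le) (div_pos hσ hg)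
  have hSINR : ∀ p, instSINR hch v σsq u p ω = p u / D p := fun p => by
    have : D p = (∑ k ∈ Finset.univ.erase u, p k * g k + σsq) / g u := by
      rw [add_div, Finset.sum_div]
      exact congrArg (· + _) (Finset.sum_congr rfl fun k _ => by ring)
    rw [this, div_div_eq_mul_div]
    rfl
  simpa only [hSINR] using hD.div_log_one_add_div u

/-- First part of Proposition 3: if `|h_u(ω)ᴴ v_u(ω)| ≠ 0` almost surely, then for
almost every `ω` the function `p ↦ p_u / log(1 + s_u(p, ω))` is an MSP function. -/
theorem stmt9 {K N : ℕ} {Ω : Type*} [MeasurableSpace Ω]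
    (P : Measure Ω) [IsProbabilityMeasure P]
    (σsq : ℝ) (hσ : 0 < σsq) (u : Fin N)
    (hch : Fin N → Ω → (Fin K → ℂ)) (v : Ω → (Fin K → ℂ))
    (hne : ∀ᵐ ω ∂P, chGain (hch u ω) (v ω) ≠ 0) :
    ∀ᵐ ω ∂P, IsMSPFun
      (fun p : Fin N → ℝ => p u / Real.log (1 + instSINR hch v σsq u p ω)) :=
  stmt9_general P σsq hσ u hch v hne
end

section
/- Let N ∈ ℕ, let r₁,…,r_N : ℝ₊₊^N → ℝ₊₊ be utility functions and α₁,…,α_N > 0 weights such that the mapping T : ℝ₊₊^N → ℝ₊₊^N with coordinates Tᵤ(p) = αᵤ pᵤ / rᵤ(p) is an MSP mapping, let ‖·‖ be a monotone norm on ℝ^N, let p_max > 0, and let S ⊆ ℝ₊₊^N be the (nonempty) set of solutions to the problem: maximize min_{u} αᵤ^{-1} rᵤ(p) subject to ‖p‖ ≤ p_max. Then for every starting point p₁ ∈ ℝ₊₊^N, the sequence generated by pₙ₊₁ = (p_max / ‖T(pₙ)‖) · T(pₙ) converges to the vector p* ∈ S of minimum l₁-norm, i.e., to the unique solution of: minimize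 ‖p‖₁ over p ∈ S. -/
open MeasureTheory Filter

namespace Stmt11Aux

variable {N : ℕ}

section MSP
variable {T : (Fin N → ℝ) → (Fin N → ℝ)}

lemma T_pos (hT : IsMSPMap T) {x : Fin N → ℝ} (hx : ∀ i, 0 < x i) (u : Fin N) : 0 < T x u :=
  (hT u).1 x hx

lemma T_mono (hT : IsMSPMap T) {x y : Fin N → ℝ} (hx : ∀ i, 0 < x i) (hy : ∀ i, 0 < y i)
    (hxy : x ≤ y) (u : Fin N) : T x u ≤ T y u :=
  (hT u).2.1 x y hx hy hxy

lemma T_scal_strict (hT : IsMSPMap T) {t : ℝ} (ht : 1 < t) {x : Fin N → ℝ} (hx : ∀ i, 0 < x i)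
    (u : Fin N) : T (t • x) u < t * T x u :=
  (hT u).2.2.1 t ht x hx

lemma T_scal_up (hT : IsMSPMap T) {t : ℝ} (ht : 1 ≤ t) {x : Fin N → ℝ} (hx : ∀ i, 0 < x i)
    (u : Fin N) : T (t • x) u ≤ t * T x u := by
  rcases eq_or_lt_of_le ht with h | h
  · subst h; simp
  · exact (T_scal_strict hT h hx u).le

lemma T_scal_dn_strict (hT : IsMSPMap T) {t : ℝ} (ht0 : 0 < t) (ht : t < 1) {x : Fin N → ℝ}
    (hx : ∀ i, 0 < x i) (u : Fin N) : t * T x u < T (t • x) u := by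
  have htx : ∀ i, 0 < (t • x) i := fun i => by
    simpa using mul_pos ht0 (hx i)
  have h1 : 1 < t⁻¹ := (one_lt_inv₀ ht0).mpr ht
  have := T_scal_strict hT h1 htx u
  rw [smul_smul, inv_mul_cancel₀ ht0.ne', one_smul] at this
  have h2 : t * (T x u) < t * (t⁻¹ * T (t • x) u) := by
    exact (mul_lt_mul_iff_right₀ ht0).mpr this
  rwa [← mul_assoc, mul_inv_cancel₀ ht0.ne', one_mul] at h2

lemma T_scal_dn (hT : IsMSPMap T) {t : ℝ} (ht0 : 0 < t) (ht : t ≤ 1) {x : Fin N → ℝ}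
    (hx : ∀ i, 0 < x i) (u : Fin N) : t * T x u ≤ T (t • x) u := by
  rcases eq_or_lt_of_le ht with h | h
  · subst h; simp
  · exact (T_scal_dn_strict hT ht0 h hx u).le

lemma T_inf (hT : IsMSPMap T) (u : Fin N) : ∃ δ > 0, ∀ x : Fin N → ℝ, (∀ i, 0 < x i) → δ ≤ T x u := by
  refine ⟨sInf ((fun x => T x u) '' PosCone N), (hT u).2.2.2, fun x hx => ?_⟩
  refine csInf_le ⟨0, fun y hy => ?_⟩ ⟨x, hx, rfl⟩
  rcases hy with ⟨z, hz, rfl⟩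
  exact (T_pos hT hz u).le

end MSP

section Norm
variable {nrm : (Fin N → ℝ) → ℝ}

lemma nrm_zero (hnrm : IsMonoNorm nrm) : nrm 0 = 0 := (hnrm.1 0).mpr rfl

lemma nrm_nonneg (hnrm : IsMonoNorm nrm) (x : Fin N → ℝ) : 0 ≤ nrm x := by
  have h := hnrm.2.2.1 x (-x)
  have h2 := hnrm.2.1 (-1) x
  simp at h2
  rw [show x + -x = 0 by abel, nrm_zero hnrm] at h
  linarith

lemma nrm_pos (hnrm : IsMonoNorm nrm) {x : Fin N → ℝ} (hx : x ≠ 0) : 0 < nrm x :=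
  lt_of_le_of_ne (nrm_nonneg hnrm x) (fun h => hx ((hnrm.1 x).mp h.symm))

lemma nrm_sum_le (hnrm : IsMonoNorm nrm) (s : Finset (Fin N)) (f : Fin N → (Fin N → ℝ)) :
    nrm (∑ i ∈ s, f i) ≤ ∑ i ∈ s, nrm (f i) := by
  classical
  induction s using Finset.cons_induction with
  | empty => simp [nrm_zero hnrm]
  | cons a s' ha ih =>
      rw [Finset.sum_cons, Finset.sum_cons]
      exact le_trans (hnrm.2.2.1 _ _) (by linarith)

lemma nrm_continuous (hnrm : IsMonoNorm nrm) : Continuous nrm := by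
  have key : ∀ x y : Fin N → ℝ, nrm x - nrm y ≤ nrm (x - y) := by
    intro x y
    have := hnrm.2.2.1 (x - y) y
    rw [sub_add_cancel] at this
    linarith
  have key2 : ∀ x y : Fin N → ℝ, |nrm x - nrm y| ≤ nrm (x - y) := by
    intro x y
    rw [abs_sub_le_iff]
    refine ⟨key x y, ?_⟩
    have := key y x
    have hsym : nrm (y - x) = nrm (x - y) := by
      have h5 := hnrm.2.1 (-1) (x - y)
      simp only [abs_neg, abs_one, one_mul] at h5
      rw [show ((-1 : ℝ) • (x - y)) = y - x by module] at h5
      exact h5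
    linarith
  set C : ℝ := ∑ i : Fin N, nrm (Pi.single i 1) with hC
  have hbound : ∀ z : Fin N → ℝ, nrm z ≤ ∑ i : Fin N, |z i| * nrm (Pi.single i 1) := by
    intro z
    have hsingle : ∀ (i : Fin N) (c : ℝ),
        (Pi.single i c : Fin N → ℝ) = c • ((Pi.single i (1:ℝ) : Fin N → ℝ)) := by
      intro i c; funext j
      by_cases h : j = i
      · subst h; simp
      · simp [Pi.single_apply, h]
    calc nrm z = nrm (∑ i : Fin N, Pi.single i (z i)) := by rw [Finset.univ_sum_single]
      _ ≤ ∑ i : Fin N, nrm (Pi.single i (z i)) := nrm_sum_le hnrm _ _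
      _ = ∑ i : Fin N, |z i| * nrm (Pi.single i 1) := Finset.sum_congr rfl fun i _ => by
            rw [hsingle i (z i)]; exact hnrm.2.1 _ _
  rw [Metric.continuous_iff]
  intro x ε hε
  have hCnn : 0 ≤ C := Finset.sum_nonneg fun i _ => nrm_nonneg hnrm _
  refine ⟨ε / (C + 1), by positivity, fun y hy => ?_⟩
  have h1 : |nrm y - nrm x| ≤ nrm (y - x) := key2 y x
  have h2 : nrm (y - x) ≤ ∑ i : Fin N, |(y - x) i| * nrm (Pi.single i 1) := hbound _
  have h3 : ∑ i : Fin N, |(y - x) i| * nrm (Pi.single i 1) ≤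
      ∑ i : Fin N, dist y x * nrm (Pi.single i 1) := by
    refine Finset.sum_le_sum fun i _ => ?_
    refine mul_le_mul_of_nonneg_right ?_ (nrm_nonneg hnrm _)
    have := dist_le_pi_dist y x i
    rw [Real.dist_eq] at this
    simpa using this
  have h4 : ∑ i : Fin N, dist y x * nrm (Pi.single i 1) = dist y x * C := by
    rw [← Finset.mul_sum]
  rw [Real.dist_eq]
  have hd : dist y x * C ≤ (ε / (C + 1)) * C := by
    refine mul_le_mul_of_nonneg_right hy.le hCnn
  have : (ε / (C + 1)) * C < ε := by
    rw [div_mul_eq_mul_div, div_lt_iff₀ (by positivity)]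
    nlinarith
  calc |nrm y - nrm x| ≤ dist y x * C := by linarith
    _ < ε := by linarith

end Norm

section Cont
variable {T : (Fin N → ℝ) → (Fin N → ℝ)}

lemma T_continuousAt (hT : IsMSPMap T) (hN : 0 < N) {x : Fin N → ℝ}
    (hx : ∀ i, 0 < x i) : ContinuousAt T x := by
  haveI : Nonempty (Fin N) := ⟨⟨0, hN⟩⟩
  rw [continuousAt_pi]
  intro u
  rw [Metric.continuousAt_iff]
  intro ε hε
  have hA : 0 < T x u := T_pos hT hx u
  set A := T x u with hAdef
  set t : ℝ := min (1/2) (ε / (2 * A)) with ht_def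
  have ht0 : 0 < t := lt_min (by norm_num) (by positivity)
  have ht1 : t ≤ 1/2 := min_le_left _ _
  set μ : ℝ := 1 + t with hμdef
  have hμ1 : 1 < μ := by rw [hμdef]; linarith
  have hμ0 : 0 < μ := by linarith
  have hμinv0 : 0 < μ⁻¹ := by positivity
  have hμinv1 : μ⁻¹ < 1 := by
    rw [inv_lt_one_iff₀]; right; exact hμ1
  have key : 1 - μ⁻¹ ≤ μ - 1 := by
    have h1 : μ * μ⁻¹ = 1 := mul_inv_cancel₀ hμ0.ne'
    nlinarith [sq_nonneg (μ - 1)]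
  set b : ℝ := Finset.univ.inf' Finset.univ_nonempty x with hbdef
  have hble : ∀ i, b ≤ x i := fun i => Finset.inf'_le x (Finset.mem_univ i)
  have hb0 : 0 < b := by
    obtain ⟨i, _, hi⟩ := Finset.exists_mem_eq_inf' (Finset.univ_nonempty) x
    rw [hbdef, hi]; exact hx i
  set δ : ℝ := (1 - μ⁻¹) * b with hδdef
  have hδ0 : 0 < δ := mul_pos (by linarith) hb0
  refine ⟨δ, hδ0, fun y hy => ?_⟩
  have hyc : ∀ i, |y i - x i| < δ := fun i => by
    have h := dist_le_pi_dist y x i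
    rw [Real.dist_eq] at h
    exact lt_of_le_of_lt h hy
  have hδle : ∀ i, δ ≤ (1 - μ⁻¹) * x i := fun i =>
    mul_le_mul_of_nonneg_left (hble i) (by linarith)
  have hylo : ∀ i, μ⁻¹ * x i ≤ y i := by
    intro i
    have h1 := (abs_lt.mp (hyc i)).1
    have h2 := hδle i
    nlinarith
  have hyhi : ∀ i, y i ≤ μ * x i := by
    intro i
    have h1 := (abs_lt.mp (hyc i)).2
    have h2 := hδle i
    have h3 : (1 - μ⁻¹) * x i ≤ (μ - 1) * x i :=
      mul_le_mul_of_nonneg_right key (hx i).le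
    nlinarith
  have hypos : ∀ i, 0 < y i := fun i =>
    lt_of_lt_of_le (mul_pos hμinv0 (hx i)) (hylo i)
  have hμx : ∀ i, 0 < (μ • x) i := fun i => by
    simpa using mul_pos hμ0 (hx i)
  have hμinvx : ∀ i, 0 < (μ⁻¹ • x) i := fun i => by
    simpa using mul_pos hμinv0 (hx i)
  have h1 : T y u ≤ μ * A := by
    refine le_trans (T_mono hT hypos hμx (fun i => ?_) u) (T_scal_up hT hμ1.le hx u)
    simpa using hyhi i
  have h2 : μ⁻¹ * A ≤ T y u := by
    refine le_trans (T_scal_dn hT hμinv0 hμinv1.le hx u)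
      (T_mono hT hμinvx hypos (fun i => ?_) u)
    simpa using hylo i
  rw [Real.dist_eq]
  have habs : |T y u - A| ≤ (μ - 1) * A := by
    rw [abs_le]
    constructor
    · nlinarith
    · nlinarith
  have hfin : (μ - 1) * A < ε := by
    have h3 : μ - 1 = t := by rw [hμdef]; ring
    have h4 : t ≤ ε / (2 * A) := min_le_right _ _
    rw [h3]
    calc t * A ≤ (ε / (2 * A)) * A := mul_le_mul_of_nonneg_right h4 hA.le
      _ = ε / 2 := by field_simp
      _ < ε := by linarith
  linarith [habs, hfin]

end Cont

section FinInf

lemma continuous_finset_inf' {ι : Type} {s : Finset ι} (hs : s.Nonempty)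
    {X : Type} [TopologicalSpace X] (f : ι → X → ℝ) (hf : ∀ i, Continuous (f i)) :
    Continuous fun y => s.inf' hs (fun i => f i y) := by
  induction hs using Finset.Nonempty.cons_induction with
  | singleton i => simpa using hf i
  | cons a s ha hs ih =>
      have : (fun y => (Finset.cons a s ha).inf' (Finset.cons_nonempty ha) (fun i => f i y))
          = fun y => min (f a y) (s.inf' hs (fun i => f i y)) := by
        funext y
        rw [Finset.inf'_cons]
      rw [this]
      exact (hf a).min ih

lemma continuous_finset_sup' {ι : Type} {s : Finset ι} (hs : s.Nonempty)
    {X : Type} [TopologicalSpace X] (f : ι → X → ℝ) (hf : ∀ i, Continuous (f i)) :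
    Continuous fun y => s.sup' hs (fun i => f i y) := by
  induction hs using Finset.Nonempty.cons_induction with
  | singleton i => simpa using hf i
  | cons a s ha hs ih =>
      have : (fun y => (Finset.cons a s ha).sup' (Finset.cons_nonempty ha) (fun i => f i y))
          = fun y => max (f a y) (s.sup' hs (fun i => f i y)) := by
        funext y
        rw [Finset.sup'_cons]
      rw [this]
      exact (hf a).max ih

end FinInf


section Scale

lemma inf'_mul_left {ι : Type} {s : Finset ι} (hs : s.Nonempty) (f : ι → ℝ)
    {a : ℝ} (ha : 0 < a) : s.inf' hs (fun i => a * f i) = a * s.inf' hs f := by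
  apply le_antisymm
  · obtain ⟨i, hi, h⟩ := Finset.exists_mem_eq_inf' hs f
    rw [h]
    exact Finset.inf'_le _ hi
  · refine Finset.le_inf' hs _ fun i hi => ?_
    exact mul_le_mul_of_nonneg_left (Finset.inf'_le f hi) ha.le

lemma sup'_mul_left {ι : Type} {s : Finset ι} (hs : s.Nonempty) (f : ι → ℝ)
    {a : ℝ} (ha : 0 < a) : s.sup' hs (fun i => a * f i) = a * s.sup' hs f := by
  apply le_antisymm
  · refine Finset.sup'_le hs _ fun i hi => ?_
    exact mul_le_mul_of_nonneg_left (Finset.le_sup' f hi) ha.le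
  · obtain ⟨i, hi, h⟩ := Finset.exists_mem_eq_sup' hs f
    rw [h]
    exact Finset.le_sup' (fun j => a * f j) hi

end Scale

end Stmt11Aux

set_option maxHeartbeats 1000000

/-- Corollary 1: for utilities `r_u` and weights `α_u` such that
`T(p) = (α_u p_u / r_u(p))_u` is an MSP mapping, a monotone norm constraint
`‖p‖ ≤ p_max`, and the (nonempty) solution set `S` of the weighted max-min problem,
the normalized fixed point iteration `pₙ₊₁ = (p_max / ‖T(pₙ)‖) • T(pₙ)` converges,
from any positive starting point, to the unique solution in `S` of minimum
`l₁`-norm. -/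
theorem stmt11 {N : ℕ} (hN : 0 < N)
    (r : Fin N → (Fin N → ℝ) → ℝ) (α : Fin N → ℝ) (hα : ∀ u, 0 < α u)
    (hr : ∀ (u : Fin N) (p : Fin N → ℝ), (∀ i, 0 < p i) → 0 < r u p)
    (T : (Fin N → ℝ) → (Fin N → ℝ))
    (hTdef : ∀ (p : Fin N → ℝ) (u : Fin N), T p u = α u * p u / r u p)
    (hT : IsMSPMap T)
    (nrm : (Fin N → ℝ) → ℝ) (hnrm : IsMonoNorm nrm)
    (pmax : ℝ) (hpmax : 0 < pmax)
    (S : Set (Fin N → ℝ))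
    (hS : S = {p : Fin N → ℝ | (∀ i, 0 < p i) ∧ nrm p ≤ pmax ∧
      ∀ q : Fin N → ℝ, (∀ i, 0 < q i) → nrm q ≤ pmax →
        (⨅ u, (α u)⁻¹ * r u q) ≤ ⨅ u, (α u)⁻¹ * r u p})
    (hSne : S.Nonempty) :
    ∃ pstar ∈ S,
      (∀ q ∈ S, (∑ i, |pstar i|) ≤ ∑ i, |q i|) ∧
      (∀ q ∈ S, (∑ i, |q i|) = (∑ i, |pstar i|) → q = pstar) ∧
      ∀ p : ℕ → (Fin N → ℝ), (∀ i, 0 < p 0 i) →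
        (∀ n, p (n + 1) = (pmax / nrm (T (p n))) • T (p n)) →
        Filter.Tendsto p Filter.atTop (nhds pstar) := by
  classical
  open Stmt11Aux in
  haveI hFinNe : Nonempty (Fin N) := ⟨⟨0, hN⟩⟩
  have huniv : (Finset.univ : Finset (Fin N)).Nonempty := Finset.univ_nonempty
  -- the objective rewritten in terms of T
  set objI : (Fin N → ℝ) → ℝ :=
    fun p => Finset.univ.inf' huniv (fun u => p u / T p u) with hobjI
  have objI_apply : ∀ p : Fin N → ℝ,
      objI p = Finset.univ.inf' huniv (fun u => p u / T p u) := fun p => rfl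
  have iInf_eq : ∀ f : Fin N → ℝ, (⨅ u, f u) = Finset.univ.inf' huniv f := by
    intro f
    apply le_antisymm
    · obtain ⟨u₀, _, h⟩ := Finset.exists_mem_eq_inf' huniv f
      rw [h]
      exact ciInf_le (Finite.bddBelow_range f) u₀
    · exact le_ciInf fun u => Finset.inf'_le f (Finset.mem_univ u)
  have obj_eq : ∀ p : Fin N → ℝ, (∀ i, 0 < p i) →
      (⨅ u, (α u)⁻¹ * r u p) = objI p := by
    intro p hp
    have hterm : ∀ u, (α u)⁻¹ * r u p = p u / T p u := by
      intro u
      rw [hTdef p u]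
      have h1 : 0 < r u p := hr u p hp
      have h2 : 0 < α u := hα u
      have h3 : 0 < p u := hp u
      field_simp
    rw [objI_apply, iInf_eq]
    exact Finset.inf'_congr huniv rfl (fun u _ => hterm u)
  -- positivity of the objective
  have objI_pos : ∀ p : Fin N → ℝ, (∀ i, 0 < p i) → 0 < objI p := by
    intro p hp
    obtain ⟨u₀, _, h⟩ := Finset.exists_mem_eq_inf' huniv (fun u => p u / T p u)
    rw [objI_apply, h]
    exact div_pos (hp u₀) (T_pos hT hp u₀)
  -- membership in S rephrased
  have hSiff : ∀ p, p ∈ S ↔ ((∀ i, 0 < p i) ∧ nrm p ≤ pmax ∧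
      ∀ q : Fin N → ℝ, (∀ i, 0 < q i) → nrm q ≤ pmax → objI q ≤ objI p) := by
    intro p
    rw [hS]
    simp only [Set.mem_setOf_eq]
    constructor
    · rintro ⟨h1, h2, h3⟩
      refine ⟨h1, h2, fun q hq hqn => ?_⟩
      rw [← obj_eq q hq, ← obj_eq p h1]
      exact h3 q hq hqn
    · rintro ⟨h1, h2, h3⟩
      refine ⟨h1, h2, fun q hq hqn => ?_⟩
      rw [obj_eq q hq, obj_eq p h1]
      exact h3 q hq hqn
  -- every member of S is nonzero and has positive norm
  have hne_zero : ∀ p : Fin N → ℝ, (∀ i, 0 < p i) → p ≠ 0 := by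
    intro p hp h0
    have := hp ⟨0, hN⟩
    rw [h0] at this
    simp at this
  -- Claim 1 : the norm constraint is tight on S
  have norm_tight : ∀ p ∈ S, nrm p = pmax := by
    intro p hp
    obtain ⟨hpos, hle, hopt⟩ := (hSiff p).mp hp
    by_contra hnrmne
    have hlt : nrm p < pmax := lt_of_le_of_ne hle hnrmne
    have hnp : 0 < nrm p := nrm_pos hnrm (hne_zero p hpos)
    set β : ℝ := pmax / nrm p with hβdef
    have hβ : 1 < β := (one_lt_div hnp).mpr hlt
    have hβ0 : 0 < β := lt_trans one_pos hβ
    have hβpos : ∀ i, 0 < (β • p) i := fun i => by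
      simpa using mul_pos hβ0 (hpos i)
    have hβnrm : nrm (β • p) = pmax := by
      rw [hnrm.2.1, abs_of_pos hβ0, hβdef]
      field_simp
    -- each new objective term is strictly larger
    have hstrict : ∀ u, p u / T p u < (β • p) u / T (β • p) u := by
      intro u
      have hs : T (β • p) u < β * T p u := T_scal_strict hT hβ hpos u
      have h1 : 0 < T (β • p) u := T_pos hT hβpos u
      have h2 : 0 < T p u := T_pos hT hpos u
      have h3 : (β • p) u = β * p u := rfl
      rw [h3]
      rw [div_lt_div_iff₀ h2 h1]
      have h4 : p u * T (β • p) u < p u * (β * T p u) :=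
        mul_lt_mul_of_pos_left hs (hpos u)
      nlinarith
    have hoptβ := hopt (β • p) hβpos hβnrm.le
    -- but objI (β•p) > objI p
    obtain ⟨u₀, _, h⟩ := Finset.exists_mem_eq_inf' huniv
      (fun u => (β • p) u / T (β • p) u)
    have : objI p < objI (β • p) := by
      rw [objI_apply (β • p), h, objI_apply]
      exact lt_of_le_of_lt (Finset.inf'_le _ (Finset.mem_univ u₀)) (hstrict u₀)
    exact absurd hoptβ (not_le.mpr this)

  -- Claim 2 : construct the fixed point pstar by iterating from a point of S
  obtain ⟨p₀, hp₀S⟩ := hSne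
  obtain ⟨hp₀pos, hp₀nrm, hp₀opt⟩ := (hSiff p₀).mp hp₀S
  set c : ℝ := objI p₀ with hcdef
  have hc0 : 0 < c := objI_pos p₀ hp₀pos
  have hc_le : ∀ u, c * T p₀ u ≤ p₀ u := by
    intro u
    have h1 : c ≤ p₀ u / T p₀ u := Finset.inf'_le _ (Finset.mem_univ u)
    exact (le_div_iff₀ (T_pos hT hp₀pos u)).mp h1
  -- the decreasing iteration
  set q0 : ℕ → (Fin N → ℝ) := fun n => Nat.rec p₀ (fun _ x => c • T x) n with hq0def
  have hq00 : q0 0 = p₀ := rfl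
  have hq0succ : ∀ n, q0 (n + 1) = c • T (q0 n) := fun n => rfl
  have hq0pos : ∀ n, ∀ i, 0 < q0 n i := by
    intro n
    induction n with
    | zero => exact hp₀pos
    | succ n ih =>
        intro i
        rw [hq0succ]
        simpa using mul_pos hc0 (T_pos hT ih i)
  have hq0dec : ∀ n, ∀ i, q0 (n + 1) i ≤ q0 n i := by
    intro n
    induction n with
    | zero =>
        intro i
        rw [hq0succ, hq00]
        simpa using hc_le i
    | succ n ih =>
        intro i
        rw [hq0succ (n + 1), hq0succ n]
        have := T_mono hT (hq0pos (n + 1)) (hq0pos n) (fun j => ih j) i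
        simpa using mul_le_mul_of_nonneg_left this hc0.le
  obtain ⟨δ, hδ0, hδle⟩ : ∃ δ : Fin N → ℝ, (∀ u, 0 < δ u) ∧
      (∀ u, ∀ x : Fin N → ℝ, (∀ i, 0 < x i) → δ u ≤ T x u) := by
    have h := fun u => T_inf hT (T := T) u
    choose δ h1 h2 using h
    exact ⟨δ, h1, h2⟩
  set b : Fin N → ℝ := fun u => min (p₀ u) (c * δ u) with hbdef
  have hb0 : ∀ u, 0 < b u := fun u => lt_min (hp₀pos u) (mul_pos hc0 (hδ0 u))
  have hqlb : ∀ n, ∀ u, b u ≤ q0 n u := by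
    intro n
    induction n with
    | zero => exact fun u => min_le_left _ _
    | succ n ih =>
        intro u
        rw [hq0succ]
        have h1 : c * δ u ≤ c * T (q0 n) u :=
          mul_le_mul_of_nonneg_left (hδle u (q0 n) (hq0pos n)) hc0.le
        have h2 : (c • T (q0 n)) u = c * T (q0 n) u := rfl
        rw [h2]
        exact le_trans (min_le_right _ _) h1
  -- coordinatewise limits
  set pstar : Fin N → ℝ := fun u => ⨅ n, q0 n u with hpstardef
  have hbdd : ∀ u, BddBelow (Set.range fun n => q0 n u) := by
    intro u
    exact ⟨b u, by rintro y ⟨n, rfl⟩; exact hqlb n u⟩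
  have hanti : ∀ u, Antitone fun n => q0 n u := fun u =>
    antitone_nat_of_succ_le fun n => hq0dec n u
  have htendu : ∀ u, Filter.Tendsto (fun n => q0 n u) Filter.atTop (nhds (pstar u)) :=
    fun u => tendsto_atTop_ciInf (hanti u) (hbdd u)
  have hpstarpos : ∀ u, 0 < pstar u := by
    intro u
    exact lt_of_lt_of_le (hb0 u) (le_ciInf fun n => hqlb n u)
  have hpstarle : ∀ u, pstar u ≤ p₀ u := by
    intro u
    exact ciInf_le (hbdd u) 0
  have htend : Filter.Tendsto q0 Filter.atTop (nhds pstar) :=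
    tendsto_pi_nhds.mpr htendu
  have hTtend : Filter.Tendsto (fun n => T (q0 n)) Filter.atTop (nhds (T pstar)) :=
    (T_continuousAt hT hN hpstarpos).tendsto.comp htend
  have htend2 : Filter.Tendsto (fun n => q0 (n + 1)) Filter.atTop (nhds (c • T pstar)) := by
    have h1 : (fun n => q0 (n + 1)) = fun n => c • T (q0 n) := funext hq0succ
    rw [h1]
    exact hTtend.const_smul c
  have htend3 : Filter.Tendsto (fun n => q0 (n + 1)) Filter.atTop (nhds pstar) :=
    (Filter.tendsto_add_atTop_iff_nat 1).mpr htend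
  have hfixvec : pstar = c • T pstar := tendsto_nhds_unique htend3 htend2
  have hfix : ∀ u, pstar u = c * T pstar u := fun u => congrFun hfixvec u
  have hTfix : ∀ u, T pstar u = pstar u / c := by
    intro u
    rw [eq_div_iff hc0.ne', mul_comm, ← hfix u]
  -- objI pstar = c
  have hobjpstar : objI pstar = c := by
    rw [objI_apply]
    have : ∀ u ∈ Finset.univ, pstar u / T pstar u = c := by
      intro u _
      rw [hTfix u, div_div_eq_mul_div, mul_comm, mul_div_assoc,
        div_self (hpstarpos u).ne', mul_one]
    rw [Finset.inf'_congr huniv rfl this]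
    exact Finset.inf'_const huniv c
  -- pstar ∈ S
  have hpstarnrm : nrm pstar ≤ pmax := by
    refine le_trans (hnrm.2.2.2 pstar p₀ (fun i => (hpstarpos i).le)
      (fun i => (hp₀pos i).le) (fun i => hpstarle i)) hp₀nrm
  have hpstarS : pstar ∈ S := by
    rw [hSiff]
    refine ⟨hpstarpos, hpstarnrm, fun q hq hqn => ?_⟩
    rw [hobjpstar]
    exact hp₀opt q hq hqn
  have hpstarnrm_eq : nrm pstar = pmax := norm_tight pstar hpstarS
  -- every member of S has objective value c and dominates pstar
  have hSval : ∀ p ∈ S, objI p = c := by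
    intro p hp
    obtain ⟨hppos, hpnrm, hpopt⟩ := (hSiff p).mp hp
    refine le_antisymm ?_ ?_
    · rw [hcdef]
      exact hp₀opt p hppos hpnrm
    · rw [← hobjpstar]
      exact hpopt pstar hpstarpos hpstarnrm
  have hSdom : ∀ p ∈ S, ∀ u, pstar u ≤ p u := by
    intro p hp
    obtain ⟨hppos, hpnrm, hpopt⟩ := (hSiff p).mp hp
    have hval : objI p = c := hSval p hp
    have hcp : ∀ u, c * T p u ≤ p u := by
      intro u
      have h1 : objI p ≤ p u / T p u := Finset.inf'_le _ (Finset.mem_univ u)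
      rw [hval] at h1
      exact (le_div_iff₀ (T_pos hT hppos u)).mp h1
    set m : ℝ := Finset.univ.inf' huniv (fun i => p i / pstar i) with hmdef
    have hm_le : ∀ i, m * pstar i ≤ p i := by
      intro i
      have h1 : m ≤ p i / pstar i := Finset.inf'_le _ (Finset.mem_univ i)
      exact (le_div_iff₀ (hpstarpos i)).mp h1
    obtain ⟨i₀, _, hi₀⟩ := Finset.exists_mem_eq_inf' huniv (fun i => p i / pstar i)
    have hm0 : 0 < m := by
      rw [hmdef, hi₀]
      exact div_pos (hppos i₀) (hpstarpos i₀)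
    by_cases hm1 : 1 ≤ m
    · intro u
      calc pstar u ≤ m * pstar u := le_mul_of_one_le_left (hpstarpos u).le hm1
        _ ≤ p u := hm_le u
    · exfalso
      push_neg at hm1
      have hmp : ∀ i, 0 < (m • pstar) i := fun i => by
        simpa using mul_pos hm0 (hpstarpos i)
      have hkey : ∀ u, m * pstar u < p u := by
        intro u
        have hstep : m * T pstar u < T (m • pstar) u :=
          T_scal_dn_strict hT hm0 hm1 hpstarpos u
        have hmono : T (m • pstar) u ≤ T p u := by
          refine T_mono hT hmp hppos (fun i => ?_) u
          simpa using hm_le i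
        have h5 : c * (m * T pstar u) < c * T p u :=
          mul_lt_mul_of_pos_left (lt_of_lt_of_le hstep hmono) hc0
        calc m * pstar u = c * (m * T pstar u) := by rw [hTfix u]; field_simp
          _ < c * T p u := h5
          _ ≤ p u := hcp u
      have hlt := hkey i₀
      have hmeq : m = p i₀ / pstar i₀ := hi₀
      rw [hmeq, div_mul_cancel₀ _ (hpstarpos i₀).ne'] at hlt
      exact lt_irrefl _ hlt

  -- relative min / max ratio functions w.r.t. pstar
  set mm : (Fin N → ℝ) → ℝ :=
    fun x => Finset.univ.inf' huniv (fun i => x i / pstar i) with hmmdef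
  set MM : (Fin N → ℝ) → ℝ :=
    fun x => Finset.univ.sup' huniv (fun i => x i / pstar i) with hMMdef
  have hmm_apply : ∀ x, mm x = Finset.univ.inf' huniv (fun i => x i / pstar i) :=
    fun x => rfl
  have hMM_apply : ∀ x, MM x = Finset.univ.sup' huniv (fun i => x i / pstar i) :=
    fun x => rfl
  have hmm_le : ∀ (x : Fin N → ℝ) (i : Fin N), mm x * pstar i ≤ x i := by
    intro x i
    have h1 : mm x ≤ x i / pstar i := Finset.inf'_le _ (Finset.mem_univ i)
    exact (le_div_iff₀ (hpstarpos i)).mp h1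
  have hMM_ge : ∀ (x : Fin N → ℝ) (i : Fin N), x i ≤ MM x * pstar i := by
    intro x i
    have h1 : x i / pstar i ≤ MM x := by
      rw [hMM_apply]
      exact Finset.le_sup' (fun j => x j / pstar j) (Finset.mem_univ i)
    exact (div_le_iff₀ (hpstarpos i)).mp h1
  have hmm_pos : ∀ x : Fin N → ℝ, (∀ i, 0 < x i) → 0 < mm x := by
    intro x hx
    obtain ⟨i₁, _, h⟩ := Finset.exists_mem_eq_inf' huniv (fun i => x i / pstar i)
    rw [hmm_apply, h]
    exact div_pos (hx i₁) (hpstarpos i₁)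
  have hmm_smul : ∀ (s : ℝ) (x : Fin N → ℝ), 0 < s → mm (s • x) = s * mm x := by
    intro s x hs
    rw [hmm_apply, hmm_apply]
    rw [show (fun i => (s • x) i / pstar i) = fun i => s * (x i / pstar i) from
      funext fun i => by simp [Pi.smul_apply, smul_eq_mul, mul_div_assoc]]
    exact inf'_mul_left huniv _ hs
  have hMM_smul : ∀ (s : ℝ) (x : Fin N → ℝ), 0 < s → MM (s • x) = s * MM x := by
    intro s x hs
    rw [hMM_apply, hMM_apply]
    rw [show (fun i => (s • x) i / pstar i) = fun i => s * (x i / pstar i) from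
      funext fun i => by simp [Pi.smul_apply, smul_eq_mul, mul_div_assoc]]
    exact sup'_mul_left huniv _ hs
  -- vectors with norm pmax are sandwiched
  have hsandwich : ∀ x : Fin N → ℝ, (∀ i, 0 < x i) → nrm x = pmax →
      mm x ≤ 1 ∧ 1 ≤ MM x := by
    intro x hx hxn
    have hmx : 0 < mm x := hmm_pos x hx
    constructor
    · have h1 : nrm (mm x • pstar) ≤ nrm x := by
        refine hnrm.2.2.2 _ _ (fun i => ?_) (fun i => (hx i).le) (fun i => ?_)
        · simpa using (mul_pos hmx (hpstarpos i)).le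
        · simpa using hmm_le x i
      rw [hnrm.2.1, abs_of_pos hmx, hpstarnrm_eq, hxn] at h1
      nlinarith
    · have hMx : 0 < MM x := by
        have h0 : x ⟨0, hN⟩ / pstar ⟨0, hN⟩ ≤ MM x := by
          rw [hMM_apply]
          exact Finset.le_sup' (fun j => x j / pstar j) (Finset.mem_univ ⟨0, hN⟩)
        exact lt_of_lt_of_le (div_pos (hx _) (hpstarpos _)) h0
      have h1 : nrm x ≤ nrm (MM x • pstar) := by
        refine hnrm.2.2.2 _ _ (fun i => (hx i).le) (fun i => ?_) (fun i => ?_)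
        · simpa using (mul_pos hMx (hpstarpos i)).le
        · simpa using hMM_ge x i
      rw [hnrm.2.1, abs_of_pos hMx, hpstarnrm_eq, hxn] at h1
      nlinarith
  -- one–step bounds for T
  have hstepA : ∀ x : Fin N → ℝ, (∀ i, 0 < x i) → mm x ≤ 1 →
      ∀ u, mm x * (pstar u / c) ≤ T x u := by
    intro x hx hm u
    have hmx : 0 < mm x := hmm_pos x hx
    have hmp : ∀ i, 0 < (mm x • pstar) i := fun i => by
      simpa using mul_pos hmx (hpstarpos i)
    have h1 : mm x * T pstar u ≤ T (mm x • pstar) u :=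
      T_scal_dn hT hmx hm hpstarpos u
    have h2 : T (mm x • pstar) u ≤ T x u := by
      refine T_mono hT hmp hx (fun i => ?_) u
      simpa using hmm_le x i
    rw [← hTfix u]
    exact le_trans h1 h2
  have hstepA' : ∀ x : Fin N → ℝ, (∀ i, 0 < x i) → mm x < 1 →
      ∀ u, mm x * (pstar u / c) < T x u := by
    intro x hx hm u
    have hmx : 0 < mm x := hmm_pos x hx
    have hmp : ∀ i, 0 < (mm x • pstar) i := fun i => by
      simpa using mul_pos hmx (hpstarpos i)
    have h1 : mm x * T pstar u < T (mm x • pstar) u :=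
      T_scal_dn_strict hT hmx hm hpstarpos u
    have h2 : T (mm x • pstar) u ≤ T x u := by
      refine T_mono hT hmp hx (fun i => ?_) u
      simpa using hmm_le x i
    rw [← hTfix u]
    exact lt_of_lt_of_le h1 h2
  have hstepB : ∀ x : Fin N → ℝ, (∀ i, 0 < x i) → 1 ≤ MM x →
      ∀ u, T x u ≤ MM x * (pstar u / c) := by
    intro x hx hM u
    have hMx : 0 < MM x := lt_of_lt_of_le one_pos hM
    have hMp : ∀ i, 0 < (MM x • pstar) i := fun i => by
      simpa using mul_pos hMx (hpstarpos i)
    have h2 : T x u ≤ T (MM x • pstar) u := by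
      refine T_mono hT hx hMp (fun i => ?_) u
      simpa using hMM_ge x i
    have h1 : T (MM x • pstar) u ≤ MM x * T pstar u :=
      T_scal_up hT hM hpstarpos u
    rw [← hTfix u]
    exact le_trans h2 h1
  have hstepB' : ∀ x : Fin N → ℝ, (∀ i, 0 < x i) → 1 < MM x →
      ∀ u, T x u < MM x * (pstar u / c) := by
    intro x hx hM u
    have hMx : 0 < MM x := lt_of_lt_of_le one_pos hM.le
    have hMp : ∀ i, 0 < (MM x • pstar) i := fun i => by
      simpa using mul_pos hMx (hpstarpos i)
    have h2 : T x u ≤ T (MM x • pstar) u := by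
      refine T_mono hT hx hMp (fun i => ?_) u
      simpa using hMM_ge x i
    have h1 : T (MM x • pstar) u < MM x * T pstar u :=
      T_scal_strict hT hM hpstarpos u
    rw [← hTfix u]
    exact lt_of_le_of_lt h2 h1
  -- ratio bounds after applying T
  have hmmT : ∀ x : Fin N → ℝ, (∀ i, 0 < x i) → mm x ≤ 1 → mm x / c ≤ mm (T x) := by
    intro x hx hm
    rw [hmm_apply (T x)]
    refine Finset.le_inf' huniv _ fun u _ => ?_
    rw [le_div_iff₀ (hpstarpos u)]
    calc mm x / c * pstar u = mm x * (pstar u / c) := by ring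
      _ ≤ T x u := hstepA x hx hm u
  have hmmT' : ∀ x : Fin N → ℝ, (∀ i, 0 < x i) → mm x < 1 → mm x / c < mm (T x) := by
    intro x hx hm
    obtain ⟨u₁, _, h⟩ := Finset.exists_mem_eq_inf' huniv (fun i => T x i / pstar i)
    rw [hmm_apply (T x), h, lt_div_iff₀ (hpstarpos u₁)]
    calc mm x / c * pstar u₁ = mm x * (pstar u₁ / c) := by ring
      _ < T x u₁ := hstepA' x hx hm u₁
  have hMMT : ∀ x : Fin N → ℝ, (∀ i, 0 < x i) → 1 ≤ MM x → MM (T x) ≤ MM x / c := by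
    intro x hx hM
    rw [hMM_apply (T x)]
    refine Finset.sup'_le huniv _ fun u _ => ?_
    rw [div_le_div_iff₀ (hpstarpos u) hc0]
    calc T x u * c ≤ MM x * (pstar u / c) * c :=
          mul_le_mul_of_nonneg_right (hstepB x hx hM u) hc0.le
      _ = MM x * pstar u := by field_simp
  have hMMT' : ∀ x : Fin N → ℝ, (∀ i, 0 < x i) → 1 < MM x → MM (T x) < MM x / c := by
    intro x hx hM
    obtain ⟨u₁, _, h⟩ := Finset.exists_mem_eq_sup' huniv (fun i => T x i / pstar i)
    rw [hMM_apply (T x), h, div_lt_div_iff₀ (hpstarpos u₁) hc0]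
    calc T x u₁ * c < MM x * (pstar u₁ / c) * c :=
          mul_lt_mul_of_pos_right (hstepB' x hx hM u₁) hc0
      _ = MM x * pstar u₁ := by field_simp
  -- continuity of the ratio functions
  have hmmcont : Continuous mm :=
    continuous_finset_inf' huniv (fun i (y : Fin N → ℝ) => y i / pstar i)
      (fun i => (continuous_apply i).div_const _)
  have hMMcont : Continuous MM :=
    continuous_finset_sup' huniv (fun i (y : Fin N → ℝ) => y i / pstar i)
      (fun i => (continuous_apply i).div_const _)
  -- nonvanishing of nrm ∘ T on the cone
  have hTnrm : ∀ x : Fin N → ℝ, (∀ i, 0 < x i) → 0 < nrm (T x) := by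
    intro x hx
    refine nrm_pos hnrm fun h0 => ?_
    have := T_pos hT hx ⟨0, hN⟩
    rw [h0] at this
    simp at this
  -- final conclusions
  refine ⟨pstar, hpstarS, ?_, ?_, ?_⟩
  · intro qq hqq
    have hdom := hSdom qq hqq
    have hqqpos := ((hSiff qq).mp hqq).1
    refine Finset.sum_le_sum fun i _ => ?_
    rw [abs_of_pos (hpstarpos i), abs_of_pos (hqqpos i)]
    exact hdom i
  · intro qq hqq hsum
    have hdom := hSdom qq hqq
    have hqqpos := ((hSiff qq).mp hqq).1
    have hzero : ∀ i ∈ Finset.univ, qq i - pstar i = 0 := by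
      refine (Finset.sum_eq_zero_iff_of_nonneg (fun i _ => by linarith [hdom i])).mp ?_
      have h1 : ∑ i, (qq i - pstar i) = (∑ i, |qq i|) - ∑ i, |pstar i| := by
        rw [Finset.sum_sub_distrib]
        congr 1
        · exact Finset.sum_congr rfl fun i _ => (abs_of_pos (hqqpos i)).symm
        · exact Finset.sum_congr rfl fun i _ => (abs_of_pos (hpstarpos i)).symm
      rw [h1, hsum, sub_self]
    funext i
    have := hzero i (Finset.mem_univ i)
    linarith
  · intro p hp0 hrec
    -- positivity of the iterates
    have hppos : ∀ n, ∀ i, 0 < p n i := by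
      intro n
      induction n with
      | zero => exact hp0
      | succ n ih =>
          intro i
          rw [hrec n]
          simpa using mul_pos (div_pos hpmax (hTnrm (p n) ih)) (T_pos hT ih i)
    have hpnrm : ∀ n, nrm (p (n + 1)) = pmax := by
      intro n
      rw [hrec n, hnrm.2.1, abs_of_pos (div_pos hpmax (hTnrm (p n) (hppos n)))]
      exact div_mul_cancel₀ _ (hTnrm (p n) (hppos n)).ne'
    -- the shifted sequence
    set q : ℕ → (Fin N → ℝ) := fun n => p (n + 1) with hqdef2
    have hqpos : ∀ n, ∀ i, 0 < q n i := fun n => hppos (n + 1)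
    have hqnrm : ∀ n, nrm (q n) = pmax := fun n => hpnrm n
    have hqrec : ∀ n, q (n + 1) = (pmax / nrm (T (q n))) • T (q n) := fun n => hrec (n + 1)
    have hqsand : ∀ n, mm (q n) ≤ 1 ∧ 1 ≤ MM (q n) :=
      fun n => hsandwich (q n) (hqpos n) (hqnrm n)
    have hsn : ∀ n, 0 < pmax / nrm (T (q n)) :=
      fun n => div_pos hpmax (hTnrm (q n) (hqpos n))
    have hmmq_pos : ∀ n, 0 < mm (q n) := fun n => hmm_pos _ (hqpos n)
    have hmmTq_pos : ∀ n, 0 < mm (T (q n)) :=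
      fun n => hmm_pos _ (fun i => T_pos hT (hqpos n) i)
    have hφratio : ∀ n, MM (q (n + 1)) / mm (q (n + 1)) = MM (T (q n)) / mm (T (q n)) := by
      intro n
      rw [hqrec n, hMM_smul _ _ (hsn n), hmm_smul _ _ (hsn n),
        mul_div_mul_left _ _ (hsn n).ne']
    set φ : ℕ → ℝ := fun n => MM (q n) / mm (q n) with hφdef
    have hφ_apply : ∀ n, φ n = MM (q n) / mm (q n) := fun n => rfl
    have hφ1 : ∀ n, 1 ≤ φ n := fun n =>
      (one_le_div (hmmq_pos n)).mpr (le_trans (hqsand n).1 (hqsand n).2)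
    have hφpos : ∀ n, 0 < φ n := fun n => lt_of_lt_of_le one_pos (hφ1 n)
    have hφmono : ∀ n, φ (n + 1) ≤ φ n := by
      intro n
      have h1 : MM (T (q n)) ≤ MM (q n) / c := hMMT _ (hqpos n) (hqsand n).2
      have h2 : mm (q n) / c ≤ mm (T (q n)) := hmmT _ (hqpos n) (hqsand n).1
      have h3 : 0 < mm (q n) / c := div_pos (hmmq_pos n) hc0
      calc φ (n + 1) = MM (T (q n)) / mm (T (q n)) := hφratio n
        _ ≤ (MM (q n) / c) / (mm (q n) / c) := by
            exact div_le_div₀ (le_of_lt (div_pos (lt_of_lt_of_le one_pos (hqsand n).2) hc0)) h1 h3 h2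
        _ = MM (q n) / mm (q n) := by
            rw [div_div_div_cancel_right₀ hc0.ne']
        _ = φ n := (hφ_apply n).symm
    have hφanti : Antitone φ := antitone_nat_of_succ_le hφmono
    set L : ℝ := ⨅ n, φ n with hLdef
    have hφbdd : BddBelow (Set.range φ) := ⟨1, by rintro y ⟨n, rfl⟩; exact hφ1 n⟩
    have hφtend : Filter.Tendsto φ Filter.atTop (nhds L) :=
      tendsto_atTop_ciInf hφanti hφbdd
    have hL1 : 1 ≤ L := le_ciInf hφ1
    have hLle : ∀ n, L ≤ φ n := fun n => ciInf_le hφbdd n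
    -- uniform bounds, compactness
    set Φ : ℝ := φ 0 with hΦdef
    have hΦ1 : 1 ≤ Φ := hφ1 0
    have hΦ0 : 0 < Φ := lt_of_lt_of_le one_pos hΦ1
    have hMMeq : ∀ n, MM (q n) = φ n * mm (q n) := by
      intro n
      rw [hφ_apply, div_mul_cancel₀ _ (hmmq_pos n).ne']
    have hMM_ub : ∀ n, MM (q n) ≤ Φ := by
      intro n
      have h3 : φ n ≤ Φ := hφanti (Nat.zero_le n)
      have h4 := (hqsand n).1
      have h5 := hmmq_pos n
      rw [hMMeq n]
      nlinarith [hφpos n]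
    have hmm_lb : ∀ n, Φ⁻¹ ≤ mm (q n) := by
      intro n
      have h1 : 1 ≤ MM (q n) := (hqsand n).2
      have h3 : φ n ≤ Φ := hφanti (Nat.zero_le n)
      have h5 := hmmq_pos n
      rw [hMMeq n] at h1
      rw [inv_eq_one_div, div_le_iff₀ hΦ0]
      nlinarith [hφpos n]
    set K : Set (Fin N → ℝ) := Set.Icc (Φ⁻¹ • pstar) (Φ • pstar) with hKdef
    have hqK : ∀ n, q n ∈ K := by
      intro n
      rw [hKdef, Set.mem_Icc]
      constructor
      · intro i
        have h1 : Φ⁻¹ * pstar i ≤ mm (q n) * pstar i :=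
          mul_le_mul_of_nonneg_right (hmm_lb n) (hpstarpos i).le
        simpa using le_trans h1 (hmm_le (q n) i)
      · intro i
        have h1 : MM (q n) * pstar i ≤ Φ * pstar i :=
          mul_le_mul_of_nonneg_right (hMM_ub n) (hpstarpos i).le
        simpa using le_trans (hMM_ge (q n) i) h1
    have hK : IsCompact K := isCompact_Icc
    obtain ⟨x, hxK, ψ, hψ, hψtend⟩ := hK.tendsto_subseq hqK
    have hxlo : Φ⁻¹ • pstar ≤ x := (Set.mem_Icc.mp hxK).1
    have hxpos : ∀ i, 0 < x i := by
      intro i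
      have h1 : Φ⁻¹ * pstar i ≤ x i := by simpa using hxlo i
      have h2 : 0 < Φ⁻¹ * pstar i := mul_pos (by positivity) (hpstarpos i)
      linarith
    have hmmx : Filter.Tendsto (fun k => mm (q (ψ k))) Filter.atTop (nhds (mm x)) :=
      (hmmcont.tendsto x).comp hψtend
    have hMMx : Filter.Tendsto (fun k => MM (q (ψ k))) Filter.atTop (nhds (MM x)) :=
      (hMMcont.tendsto x).comp hψtend
    have hmmx_pos : 0 < mm x := hmm_pos x hxpos
    have hφψ : Filter.Tendsto (fun k => φ (ψ k)) Filter.atTop (nhds L) :=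
      hφtend.comp hψ.tendsto_atTop
    have hφx : MM x / mm x = L := by
      refine tendsto_nhds_unique ?_ hφψ
      exact hMMx.div hmmx hmmx_pos.ne'
    have hmmx1 : mm x ≤ 1 :=
      le_of_tendsto hmmx (Filter.Eventually.of_forall fun k => (hqsand (ψ k)).1)
    have hMMx1 : 1 ≤ MM x :=
      ge_of_tendsto hMMx (Filter.Eventually.of_forall fun k => (hqsand (ψ k)).2)
    have hxTpos : ∀ i, 0 < T x i := T_pos hT hxpos
    have hTmm_pos : 0 < mm (T x) := hmm_pos _ hxTpos
    -- L = 1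
    have hLeq : L = 1 := by
      by_contra hLne
      have hLgt : 1 < L := lt_of_le_of_ne hL1 (Ne.symm hLne)
      have hRlt : MM (T x) / mm (T x) < L := by
        rw [← hφx]
        have hcase : mm x < 1 ∨ 1 < MM x := by
          by_contra hcon
          push_neg at hcon
          obtain ⟨h1, h2⟩ := hcon
          have h3 : MM x / mm x ≤ 1 := by
            rw [div_le_one hmmx_pos]
            linarith
          rw [hφx] at h3
          linarith
        rcases hcase with hcs | hcs
        · have h1 : mm x / c < mm (T x) := hmmT' x hxpos hcs
          have h2 : MM (T x) ≤ MM x / c := hMMT x hxpos hMMx1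
          have h3 : 0 < mm x / c := div_pos hmmx_pos hc0
          have hMMxpos : 0 < MM x / c := div_pos (lt_of_lt_of_le one_pos hMMx1) hc0
          calc MM (T x) / mm (T x) ≤ (MM x / c) / mm (T x) :=
                (div_le_div_iff_of_pos_right hTmm_pos).mpr h2
            _ < (MM x / c) / (mm x / c) := div_lt_div_of_pos_left hMMxpos h3 h1
            _ = MM x / mm x := by rw [div_div_div_cancel_right₀ hc0.ne']
        · have h1 : mm x / c ≤ mm (T x) := hmmT x hxpos hmmx1
          have h2 : MM (T x) < MM x / c := hMMT' x hxpos hcs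
          have h3 : 0 < mm x / c := div_pos hmmx_pos hc0
          have hMMxpos : 0 ≤ MM x / c := (div_pos (lt_of_lt_of_le one_pos hMMx1) hc0).le
          calc MM (T x) / mm (T x) < (MM x / c) / mm (T x) :=
                (div_lt_div_iff_of_pos_right hTmm_pos).mpr h2
            _ ≤ (MM x / c) / (mm x / c) := div_le_div_of_nonneg_left hMMxpos h3 h1
            _ = MM x / mm x := by rw [div_div_div_cancel_right₀ hc0.ne']
      have hTqtend : Filter.Tendsto (fun k => T (q (ψ k))) Filter.atTop (nhds (T x)) :=
        (T_continuousAt hT hN hxpos).tendsto.comp hψtend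
      have h5a : Filter.Tendsto (fun k => MM (T (q (ψ k)))) Filter.atTop
          (nhds (MM (T x))) := (hMMcont.tendsto (T x)).comp hTqtend
      have h5b : Filter.Tendsto (fun k => mm (T (q (ψ k)))) Filter.atTop
          (nhds (mm (T x))) := (hmmcont.tendsto (T x)).comp hTqtend
      have h5 := h5a.div h5b hTmm_pos.ne'
      have h7 := h5.eventually_lt_const hRlt
      obtain ⟨k, hk⟩ := h7.exists
      have hk' : φ (ψ k + 1) < L := by
        calc φ (ψ k + 1) = MM (T (q (ψ k))) / mm (T (q (ψ k))) := hφratio (ψ k)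
          _ < L := hk
      exact absurd (hLle (ψ k + 1)) (not_le.mpr hk')
    -- convergence of the whole sequence
    have hMMtend1 : Filter.Tendsto (fun n => MM (q n)) Filter.atTop (nhds 1) := by
      have hup : ∀ n, MM (q n) ≤ φ n := by
        intro n
        rw [hMMeq n]
        calc φ n * mm (q n) ≤ φ n * 1 :=
              mul_le_mul_of_nonneg_left (hqsand n).1 (hφpos n).le
          _ = φ n := mul_one _
      have h1 : Filter.Tendsto φ Filter.atTop (nhds 1) := by
        rw [← hLeq]
        exact hφtend
      exact tendsto_of_tendsto_of_tendsto_of_le_of_le tendsto_const_nhds h1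
        (fun n => (hqsand n).2) hup
    have hmmtend1 : Filter.Tendsto (fun n => mm (q n)) Filter.atTop (nhds 1) := by
      have hinv : Filter.Tendsto (fun n => (φ n)⁻¹) Filter.atTop (nhds 1) := by
        have h0 := hφtend.inv₀ (by rw [hLeq]; norm_num : L ≠ 0)
        rw [hLeq] at h0
        simpa using h0
      have hlo : ∀ n, (φ n)⁻¹ ≤ mm (q n) := by
        intro n
        have h1 : 1 ≤ MM (q n) := (hqsand n).2
        rw [hMMeq n] at h1
        rw [inv_eq_one_div, div_le_iff₀ (hφpos n)]
        nlinarith [hmmq_pos n]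
      exact tendsto_of_tendsto_of_tendsto_of_le_of_le hinv tendsto_const_nhds
        hlo (fun n => (hqsand n).1)
    have hcoord : ∀ i, Filter.Tendsto (fun n => q n i) Filter.atTop (nhds (pstar i)) := by
      intro i
      have hlow : Filter.Tendsto (fun n => mm (q n) * pstar i) Filter.atTop
          (nhds (pstar i)) := by
        have h0 := hmmtend1.mul_const (pstar i)
        rwa [one_mul] at h0
      have hhigh : Filter.Tendsto (fun n => MM (q n) * pstar i) Filter.atTop
          (nhds (pstar i)) := by
        have h0 := hMMtend1.mul_const (pstar i)
        rwa [one_mul] at h0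
      exact tendsto_of_tendsto_of_tendsto_of_le_of_le hlow hhigh
        (fun n => hmm_le (q n) i) (fun n => hMM_ge (q n) i)
    have hqtend : Filter.Tendsto q Filter.atTop (nhds pstar) :=
      tendsto_pi_nhds.mpr hcoord
    exact (Filter.tendsto_add_atTop_iff_nat 1).mp hqtend
end

section
/- Let T : ℝ₊₊^N → ℝ₊₊^N be an MSP mapping. Then T has at most one fixed point; that is, if x, y ∈ ℝ₊₊^N satisfy T(x) = x and T(y) = y, then x = y. -/
open MeasureTheory Filter

lemma msp_fixed_le {N : ℕ} (T : (Fin N → ℝ) → (Fin N → ℝ)) (hT : IsMSPMap T)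
    (x y : Fin N → ℝ) (hx : ∀ i, 0 < x i) (hy : ∀ i, 0 < y i)
    (hfx : T x = x) (hfy : T y = y) : x ≤ y := by
  by_contra h
  rw [Pi.le_def] at h
  push_neg at h
  obtain ⟨i, hi⟩ := h
  have hne : (Finset.univ : Finset (Fin N)).Nonempty := ⟨i, Finset.mem_univ i⟩
  set α := Finset.univ.sup' hne (fun j => x j / y j) with hα
  obtain ⟨i₀, _, hi₀⟩ := Finset.exists_mem_eq_sup' hne (fun j => x j / y j)
  have hα1 : 1 < α := lt_of_lt_of_le ((one_lt_div (hy i)).2 hi)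
    (Finset.le_sup' (fun j => x j / y j) (Finset.mem_univ i))
  have hαy : ∀ j, 0 < (α • y) j := fun j => by
    simpa using mul_pos (lt_trans one_pos hα1) (hy j)
  have hle : x ≤ α • y := fun j => by
    have := Finset.le_sup' (fun j => x j / y j) (Finset.mem_univ j)
    simpa using (div_le_iff₀ (hy j)).1 this
  have h1 : T x i₀ ≤ T (α • y) i₀ := (hT i₀).2.1 x (α • y) hx hαy hle
  have h2 : T (α • y) i₀ < α * T y i₀ := (hT i₀).2.2.1 α hα1 y hy
  have hx0 : x i₀ = α * y i₀ := by
    rw [hα, hi₀, div_mul_eq_mul_div, mul_div_assoc,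
      div_self (hy i₀).ne', mul_one]
  have : x i₀ < x i₀ := by
    calc x i₀ = T x i₀ := by rw [hfx]
    _ ≤ T (α • y) i₀ := h1
    _ < α * T y i₀ := h2
    _ = α * y i₀ := by rw [hfy]
    _ = x i₀ := hx0.symm
  exact lt_irrefl _ this

/-- An MSP mapping has at most one fixed point in the positive cone. -/
theorem stmt13 {N : ℕ} (T : (Fin N → ℝ) → (Fin N → ℝ)) (hT : IsMSPMap T)
    (x y : Fin N → ℝ) (hx : ∀ i, 0 < x i) (hy : ∀ i, 0 < y i)
    (hfx : T x = x) (hfy : T y = y) : x = y :=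
  le_antisymm (msp_fixed_le T hT x y hx hy hfx hfy)
    (msp_fixed_le T hT y x hy hx hfy hfx)
end
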